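/- arXiv:2509.18012 — 8 statements merged into one kernel-verified Lean document; each statement's English description precedes it below -/
import Mathlib

section
/- Let G be an n-vertex graph whose edges are coloured with r colours, and suppose the minimum degree δ(G) satisfies δ(G) ≤ rn/(r+1). Then G contains a monochromatic matching with at least δ(G)/r edges. -/
/-!
Suppose every colour class has matching number at most `K`, where `rK < δ`. By the Tutte–Berge
formula, each class `i` has a set `S_i` and a partition of `V \ S_i`, with no class-`i` edge
between different parts, such that `|S_i| + n ≤ (number of parts) + 2K`. Since
`n ≥ (r + 1)K + 2`, counting the pairs of vertices that share a part for some colour yields two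
vertices `u, v`, outside every `S_i`, that lie in different parts for every colour. The class-`i`
neighbours of `u` and of `v` lie in `S_i` and in their own parts, which forces
`deg_i u + deg_i v ≤ 2K`; summing over the colours gives `2δ ≤ 2rK`, a contradiction.

The Tutte–Berge witness is built by induction on `K`: delete a vertex covered by every maximum
matching, or, if there is none, take the components, each of which a maximum matching misses in
at most one vertex (Gallai's lemma, by exchanging along alternating paths).
-/

open Finset

section Fibres

variable {α β : Type*} [DecidableEq β] (T : Finset α) (c : α → β)

lemma Finset.sum_card_fiber_sub_one_add_card_image :
    ∑ l ∈ T.image c, (#{x ∈ T | c x = l} - 1) + #(T.image c) = #T := by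
  rw [card_eq_sum_card_image c T, card_eq_sum_ones (T.image c), ← sum_add_distrib]
  refine sum_congr rfl fun l hl => ?_
  obtain ⟨x, hx, rfl⟩ := mem_image.1 hl
  have : 0 < #{y ∈ T | c y = c x} := card_pos.2 ⟨x, by simp [hx]⟩
  omega

lemma Finset.card_fiber_add_card_fiber_add_card_image_le {u v : α} (hu : u ∈ T) (hv : v ∈ T)
    (huv : c u ≠ c v) :
    #{x ∈ T | c x = c u} + #{x ∈ T | c x = c v} + #(T.image c) ≤ #T + 2 := by
  have hsub : {c u, c v} ⊆ T.image c := by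
    simp [insert_subset_iff, mem_image_of_mem c hu, mem_image_of_mem c hv]
  have := sum_le_sum_of_subset (f := fun l => #{x ∈ T | c x = l} - 1) hsub
  rw [sum_pair huv] at this
  have := sum_card_fiber_sub_one_add_card_image T c
  have : 0 < #{x ∈ T | c x = c u} := card_pos.2 ⟨u, by simp [hu]⟩
  have : 0 < #{x ∈ T | c x = c v} := card_pos.2 ⟨v, by simp [hv]⟩
  omega

lemma Finset.card_offDiag_filter_eq_le [DecidableEq α] :
    #{p ∈ T.offDiag | c p.1 = c p.2} ≤ (#T - #(T.image c) + 1) * (#T - #(T.image c)) := by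
  have hsum := sum_card_fiber_sub_one_add_card_image T c
  set e := #T - #(T.image c)
  have hsub : {p ∈ T.offDiag | c p.1 = c p.2} ⊆
      (T.image c).biUnion fun l => {x ∈ T | c x = l}.offDiag := by
    intro p hp
    simp only [mem_filter, mem_offDiag] at hp
    exact mem_biUnion.2 ⟨c p.1, mem_image_of_mem c hp.1.1, by simp [hp]⟩
  calc #{p ∈ T.offDiag | c p.1 = c p.2}
      ≤ ∑ l ∈ T.image c, #{x ∈ T | c x = l}.offDiag :=
        (card_le_card hsub).trans card_biUnion_le
    _ = ∑ l ∈ T.image c, #{x ∈ T | c x = l} * (#{x ∈ T | c x = l} - 1) := by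
      simp only [offDiag_card, Nat.mul_sub_one]
    _ ≤ ∑ l ∈ T.image c, (e + 1) * (#{x ∈ T | c x = l} - 1) := by
      refine sum_le_sum fun l hl => Nat.mul_le_mul_right _ ?_
      have := single_le_sum (f := fun l => #{x ∈ T | c x = l} - 1) (fun _ _ => Nat.zero_le _) hl
      omega
    _ = (e + 1) * e := by rw [← mul_sum]; congr 1; omega

end Fibres

namespace SimpleGraph

section Matchings

variable {V : Type*} {H : SimpleGraph V}

/-- The edge-set form of `Subgraph.IsMatching`. -/
def IsEdgeMatching (H : SimpleGraph V) (M : Finset (Sym2 V)) : Prop :=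
  ↑M ⊆ H.edgeSet ∧ ∀ e ∈ M, ∀ f ∈ M, ∀ x ∈ e, x ∈ f → e = f

def IsMaximumEdgeMatching (H : SimpleGraph V) (M : Finset (Sym2 V)) : Prop :=
  H.IsEdgeMatching M ∧ ∀ N, H.IsEdgeMatching N → #N ≤ #M

namespace IsEdgeMatching

variable {M N : Finset (Sym2 V)}

lemma empty : H.IsEdgeMatching ∅ := ⟨by simp, by simp⟩

lemma mono (hM : H.IsEdgeMatching M) (hNM : N ⊆ M) : H.IsEdgeMatching N :=
  ⟨(coe_subset.2 hNM).trans hM.1, fun e he f hf => hM.2 e (hNM he) f (hNM hf)⟩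

lemma of_le {H' : SimpleGraph V} (hM : H'.IsEdgeMatching M) (h : H' ≤ H) : H.IsEdgeMatching M :=
  ⟨hM.1.trans (edgeSet_mono h), hM.2⟩

lemma adj (hM : H.IsEdgeMatching M) {a b : V} (hab : s(a, b) ∈ M) : H.Adj a b := hM.1 hab

end IsEdgeMatching

lemma exists_isMaximumEdgeMatching [Fintype V] (H : SimpleGraph V) :
    ∃ M, H.IsMaximumEdgeMatching M := by
  classical
  obtain ⟨M, hM, hmax⟩ := exists_max_image ((univ : Finset (Finset (Sym2 V))).filter
    H.IsEdgeMatching) card ⟨∅, by simpa using IsEdgeMatching.empty⟩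
  exact ⟨M, (mem_filter.1 hM).2, fun N hN => hmax N (by simpa using hN)⟩

variable [DecidableEq V]

def coveredVerts (M : Finset (Sym2 V)) : Finset V := M.biUnion Sym2.toFinset

variable {M N : Finset (Sym2 V)} {a b x : V}

lemma mem_coveredVerts : x ∈ coveredVerts M ↔ ∃ e ∈ M, x ∈ e := by
  simp [coveredVerts]

lemma exists_mk_mem_of_mem_coveredVerts (hx : x ∈ coveredVerts M) : ∃ a, s(x, a) ∈ M := by
  obtain ⟨e, he, hxe⟩ := mem_coveredVerts.1 hx
  obtain ⟨a, rfl⟩ := Sym2.mem_iff_exists.1 hxe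
  exact ⟨a, he⟩

lemma mem_coveredVerts_of_mk_mem (hab : s(a, b) ∈ M) :
    a ∈ coveredVerts M ∧ b ∈ coveredVerts M :=
  ⟨mem_coveredVerts.2 ⟨_, hab, Sym2.mem_mk_left a b⟩,
    mem_coveredVerts.2 ⟨_, hab, Sym2.mem_mk_right a b⟩⟩

lemma coveredVerts_mono (h : M ⊆ N) : coveredVerts M ⊆ coveredVerts N :=
  biUnion_subset_biUnion_of_subset_left _ h

lemma coveredVerts_union : coveredVerts (M ∪ N) = coveredVerts M ∪ coveredVerts N :=
  union_biUnion

lemma mem_coveredVerts_insert : x ∈ coveredVerts (insert s(a, b) M) ↔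
    x = a ∨ x = b ∨ x ∈ coveredVerts M := by
  simp [mem_coveredVerts, or_assoc]

lemma card_coveredVerts_le (M : Finset (Sym2 V)) : #(coveredVerts M) ≤ 2 * #M :=
  calc #(coveredVerts M) ≤ ∑ e ∈ M, #e.toFinset := card_biUnion_le
    _ ≤ ∑ _e ∈ M, 2 := sum_le_sum fun e _ => by rw [Sym2.card_toFinset]; split_ifs <;> omega
    _ = 2 * #M := by rw [sum_const, smul_eq_mul, mul_comm]

lemma card_insert_mk_of_notMem_coveredVerts (ha : a ∉ coveredVerts M) :
    #(insert s(a, b) M) = #M + 1 :=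
  card_insert_of_notMem fun h => ha (mem_coveredVerts_of_mk_mem h).1

namespace IsEdgeMatching

lemma insert (hM : H.IsEdgeMatching M) (hab : H.Adj a b) (ha : a ∉ coveredVerts M)
    (hb : b ∉ coveredVerts M) : H.IsEdgeMatching (insert s(a, b) M) := by
  refine ⟨by simpa [Set.insert_subset_iff] using ⟨hab, hM.1⟩, ?_⟩
  have hfree : ∀ f ∈ M, ∀ x ∈ s(a, b), x ∉ f := by
    rintro f hf x hx hxf
    rcases Sym2.mem_iff.1 hx with rfl | rfl
    exacts [ha (mem_coveredVerts.2 ⟨f, hf, hxf⟩), hb (mem_coveredVerts.2 ⟨f, hf, hxf⟩)]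
  simp only [mem_insert]
  rintro e (rfl | he) f (rfl | hf) x hxe hxf
  exacts [rfl, (hfree f hf x hxe hxf).elim, (hfree e he x hxf hxe).elim, hM.2 e he f hf x hxe hxf]

lemma mem_coveredVerts_erase (hM : H.IsEdgeMatching M) (hab : s(a, b) ∈ M) :
    x ∈ coveredVerts (M.erase s(a, b)) ↔ x ∈ coveredVerts M ∧ x ≠ a ∧ x ≠ b := by
  simp only [mem_coveredVerts, mem_erase, ← not_or, ← Sym2.mem_iff]
  constructor
  · rintro ⟨f, ⟨hfe, hf⟩, hxf⟩
    exact ⟨⟨f, hf, hxf⟩, fun hxe => hfe (hM.2 f hf _ hab x hxf hxe)⟩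
  · rintro ⟨⟨f, hf, hxf⟩, hxe⟩
    exact ⟨f, ⟨by rintro rfl; exact hxe hxf, hf⟩, hxf⟩

end IsEdgeMatching

lemma IsMaximumEdgeMatching.not_adj (hM : H.IsMaximumEdgeMatching M) (ha : a ∉ coveredVerts M)
    (hb : b ∉ coveredVerts M) : ¬H.Adj a b := fun hab => by
  have := hM.2 _ (hM.1.insert hab ha hb)
  rw [card_insert_mk_of_notMem_coveredVerts ha] at this
  omega

/-- The edge `wa` can be added back to any matching inside `(M - wa) ∪ (N - ab)`. -/
lemma forall_card_le_of_erase_union_erase (hM : H.IsEdgeMatching M) (hN : H.IsEdgeMatching N)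
    (hmax : ∀ L ⊆ M ∪ N, H.IsEdgeMatching L → #L ≤ #N) {w : V} (hwa : s(w, a) ∈ M)
    (hab : s(a, b) ∈ N) (hwN : w ∉ coveredVerts N) :
    ∀ L ⊆ M.erase s(w, a) ∪ N.erase s(a, b), H.IsEdgeMatching L →
      #L ≤ #(N.erase s(a, b)) := by
  intro L hL hLm
  have hcovL : ∀ x ∈ coveredVerts L, x ≠ w ∧ x ≠ a := by
    intro x hx
    have := coveredVerts_mono hL hx
    rw [coveredVerts_union, mem_union, hM.mem_coveredVerts_erase hwa,
      hN.mem_coveredVerts_erase hab] at this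
    rcases this with ⟨-, h⟩ | ⟨hxN, h, -⟩
    · exact h
    · exact ⟨by rintro rfl; exact hwN hxN, h⟩
  have hw : w ∉ coveredVerts L := fun h => (hcovL w h).1 rfl
  have := hmax _ (insert_subset (mem_union_left _ hwa)
    (hL.trans (union_subset_union (erase_subset _ _) (erase_subset _ _))))
    (hLm.insert (hM.adj hwa) hw fun h => (hcovL a h).2 rfl)
  rw [card_insert_mk_of_notMem_coveredVerts hw, ← card_erase_add_one hab] at this
  omega

/-- Exchange along the alternating path of `M` and `N` that starts at `w`: when it cannot
augment `N`, it turns `M` into a matching of the same size that trades `w` for a vertex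
`z` covered by `N`. -/
lemma exists_exchange (hM : H.IsEdgeMatching M) (hN : H.IsEdgeMatching N)
    (hmax : ∀ L ⊆ M ∪ N, H.IsEdgeMatching L → #L ≤ #N) {w : V}
    (hwM : w ∈ coveredVerts M) (hwN : w ∉ coveredVerts N) :
    ∃ M' z, H.IsEdgeMatching M' ∧ #M' = #M ∧ z ∈ coveredVerts N ∧
      ∀ x, x ∈ coveredVerts M' ↔ x = z ∨ x ∈ coveredVerts M ∧ x ≠ w := by
  induction M using Finset.strongInduction generalizing N w with
  | H M ih =>
  obtain ⟨a, hwa⟩ := exists_mk_mem_of_mem_coveredVerts hwM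
  by_cases haN : a ∉ coveredVerts N
  · have := hmax _ (insert_subset (mem_union_left _ hwa) subset_union_right)
      (hN.insert (hM.adj hwa) hwN haN)
    rw [card_insert_mk_of_notMem_coveredVerts hwN] at this
    omega
  push Not at haN
  obtain ⟨b, hab⟩ := exists_mk_mem_of_mem_coveredVerts haN
  have haM := (mem_coveredVerts_of_mk_mem hwa).2
  have hbN := (mem_coveredVerts_of_mk_mem hab).2
  have hbw : b ≠ w := by rintro rfl; exact hwN hbN
  have hcardM : #(M.erase s(w, a)) + 1 = #M := card_erase_add_one hwa
  have hcovM₁ := fun x => hM.mem_coveredVerts_erase hwa (x := x)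
  by_cases hbM : b ∉ coveredVerts M
  · have haM₁ : a ∉ coveredVerts (M.erase s(w, a)) := by simp [hcovM₁]
    refine ⟨insert s(a, b) (M.erase s(w, a)), b, (hM.mono (erase_subset _ _)).insert
      (hN.adj hab) haM₁ (by simp [hcovM₁, hbM]),
      by rw [card_insert_mk_of_notMem_coveredVerts haM₁, hcardM], hbN, fun x => ?_⟩
    rw [mem_coveredVerts_insert, hcovM₁]
    grind
  push Not at hbM
  obtain ⟨M₁, z, hM₁, hcard₁, hz, hcov₁⟩ := ih _ (erase_ssubset hwa)
    (hM.mono (erase_subset _ _)) (hN.mono (erase_subset _ _))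
    (forall_card_le_of_erase_union_erase hM hN hmax hwa hab hwN)
    ((hcovM₁ b).2 ⟨hbM, hbw, (hN.adj hab).ne'⟩) (by simp [hN.mem_coveredVerts_erase hab])
  obtain ⟨hzN, hza, hzb⟩ := (hN.mem_coveredVerts_erase hab).1 hz
  have haM₁ : a ∉ coveredVerts M₁ := by simp [hcov₁, hcovM₁, hza.symm]
  refine ⟨insert s(a, b) M₁, z, hM₁.insert (hN.adj hab) haM₁ (by simp [hcov₁, hzb.symm]),
    by rw [card_insert_mk_of_notMem_coveredVerts haM₁, hcard₁, hcardM], hzN, fun x => ?_⟩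
  rw [mem_coveredVerts_insert, hcov₁, hcovM₁]
  grind

end Matchings

section TutteBerge

variable {V : Type*} [DecidableEq V] {H : SimpleGraph V} {M : Finset (Sym2 V)}

/-- Gallai's lemma. If `u ~ w` starts a walk to `v`, then `w` is covered by `M`; exchanging `M`
against a maximum matching that misses `w` either leaves `u` and `w` both uncovered, contradicting
maximality, or moves the uncovered end `u` one step along the walk. -/
lemma IsMaximumEdgeMatching.eq_of_reachable
    (hmiss : ∀ x, ∃ N, H.IsMaximumEdgeMatching N ∧ x ∉ coveredVerts N)
    (hM : H.IsMaximumEdgeMatching M) {u v : V} (hu : u ∉ coveredVerts M)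
    (hv : v ∉ coveredVerts M) (huv : H.Reachable u v) : u = v := by
  obtain ⟨p⟩ := huv
  induction p generalizing M with
  | nil => rfl
  | @cons u w v huw p ih =>
  by_cases hne : u = v
  · exact hne
  by_cases hw : w ∉ coveredVerts M
  · exact (hM.not_adj hu hw huw).elim
  push Not at hw
  obtain ⟨N, hN, hwN⟩ := hmiss w
  obtain ⟨M', z, hM', hcard, hzN, hcov⟩ :=
    exists_exchange hM.1 hN.1 (fun L _ hL => hN.2 L hL) hw hwN
  have hM'max : H.IsMaximumEdgeMatching M' := ⟨hM', fun L hL => hcard ▸ hM.2 L hL⟩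
  have hwM' : w ∉ coveredVerts M' := by
    rw [hcov]; rintro (rfl | ⟨-, h⟩); exacts [hwN hzN, h rfl]
  by_cases hzu : z = u
  · have hwv := ih hM'max hwM' <| by
      rw [hcov]; rintro (rfl | ⟨h, -⟩); exacts [hne hzu.symm, hv h]
    exact (hv (hwv ▸ hw)).elim
  · exact (hM'max.not_adj (by rw [hcov]; rintro (rfl | ⟨h, -⟩); exacts [hzu rfl, hu h])
      hwM' huw).elim

lemma notMem_coveredVerts_of_isEdgeMatching_deleteIncidenceSet {v : V}
    (hM : (H.deleteIncidenceSet v).IsEdgeMatching M) : v ∉ coveredVerts M := by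
  rw [mem_coveredVerts]
  rintro ⟨e, he, hve⟩
  obtain ⟨a, rfl⟩ := Sym2.mem_iff_exists.1 hve
  exact (deleteIncidenceSet_adj.1 (hM.adj he)).2.1 rfl

variable [Fintype V]

/-- The partition of `V \ S` in the Tutte–Berge formula is given by the fibres of `c`. -/
def IsTutteBergeWitness (H : SimpleGraph V) (K : ℕ) (S : Finset V) (c : V → V) : Prop :=
  (∀ x y, x ∉ S → y ∉ S → H.Adj x y → c x = c y) ∧
    #S + Fintype.card V ≤ #((univ \ S).image c) + 2 * K

lemma IsTutteBergeWitness.mono {K K' : ℕ} {S : Finset V} {c : V → V}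
    (h : H.IsTutteBergeWitness K S c) (hK : K ≤ K') : H.IsTutteBergeWitness K' S c :=
  ⟨h.1, by have := h.2; omega⟩

/-- The components form a witness, as a maximum matching misses at most one vertex in each. -/
lemma isTutteBergeWitness_of_forall_exists_notMem
    (hmiss : ∀ x, ∃ N, H.IsMaximumEdgeMatching N ∧ x ∉ coveredVerts N)
    {M : Finset (Sym2 V)} (hM : H.IsMaximumEdgeMatching M) :
    H.IsTutteBergeWitness #M ∅ fun x => (H.connectedComponentMk x).out := by
  have hc : ∀ x y, (H.connectedComponentMk x).out = (H.connectedComponentMk y).out →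
      H.Reachable x y := fun x y h => ConnectedComponent.exact <| by
    have := Quot.out_eq (H.connectedComponentMk x)
    rw [h] at this
    exact this.symm.trans (Quot.out_eq _)
  refine ⟨fun x y _ _ hxy => congrArg Quot.out (ConnectedComponent.eq.2 hxy.reachable), ?_⟩
  have hinj : #(univ \ coveredVerts M) ≤ #((univ \ ∅).image
      fun x => (H.connectedComponentMk x).out) :=
    card_le_card_of_injOn _ (fun x _ => by simp) fun x hx y hy hxy =>
      hM.eq_of_reachable hmiss (by simpa using hx) (by simpa using hy) (hc x y hxy)
  have := card_sdiff_add_card_eq_card (subset_univ (coveredVerts M))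
  have := card_coveredVerts_le M
  rw [card_univ] at *
  simp only [card_empty]
  omega

lemma IsTutteBergeWitness.of_deleteIncidenceSet {K : ℕ} {v : V} {S : Finset V} {c : V → V}
    (h : (H.deleteIncidenceSet v).IsTutteBergeWitness K S c) :
    H.IsTutteBergeWitness (K + 1) (insert v S) c := by
  refine ⟨fun x y hx hy hxy => h.1 x y (by simp_all) (by simp_all) ?_, ?_⟩
  · exact deleteIncidenceSet_adj.2 ⟨hxy, by rintro rfl; simp at hx, by rintro rfl; simp at hy⟩
  · have himage : (univ \ S).image c ⊆ insert (c v) ((univ \ insert v S).image c) := by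
      intro l hl
      obtain ⟨x, hx, rfl⟩ := mem_image.1 hl
      by_cases hxv : x = v
      · simp [hxv]
      · exact mem_insert_of_mem (mem_image_of_mem c (by simp_all))
    have := (card_le_card himage).trans (card_insert_le _ _)
    have := card_insert_le v S
    have := h.2
    omega

theorem exists_isTutteBergeWitness (K : ℕ) (H : SimpleGraph V)
    (hK : ∀ M, H.IsEdgeMatching M → #M ≤ K) : ∃ S c, H.IsTutteBergeWitness K S c := by
  induction K using Nat.strong_induction_on generalizing H with
  | _ K ih =>
  obtain ⟨M₀, hM₀⟩ := H.exists_isMaximumEdgeMatching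
  by_cases hmiss : ∀ x, ∃ N, H.IsMaximumEdgeMatching N ∧ x ∉ coveredVerts N
  · exact ⟨∅, _,
      (isTutteBergeWitness_of_forall_exists_notMem hmiss hM₀).mono (hK M₀ hM₀.1)⟩
  push Not at hmiss
  obtain ⟨v, hv⟩ := hmiss
  have hM₀pos : 0 < #M₀ := card_pos.2 <| by
    obtain ⟨e, he, -⟩ := mem_coveredVerts.1 (hv M₀ hM₀)
    exact ⟨e, he⟩
  have hM₀K := hK M₀ hM₀.1
  have hK' : ∀ L, (H.deleteIncidenceSet v).IsEdgeMatching L → #L ≤ K - 1 := by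
    intro L hL
    have hLH := hL.of_le (deleteIncidenceSet_le H v)
    by_contra hlt
    exact notMem_coveredVerts_of_isEdgeMatching_deleteIncidenceSet hL
      (hv L ⟨hLH, fun N hN => (hM₀.2 N hN).trans (by omega)⟩)
  obtain ⟨S, c, hSc⟩ := ih (K - 1) (by omega) _ hK'
  exact ⟨_, _, hSc.of_deleteIncidenceSet.mono (by omega)⟩

lemma IsTutteBergeWitness.card_excess_add_le {K : ℕ} {S : Finset V} {c : V → V}
    (h : H.IsTutteBergeWitness K S c) :
    #(univ \ S) - #((univ \ S).image c) + 2 * #S ≤ 2 * K := by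
  have := h.2
  have := card_image_le (s := univ \ S) (f := c)
  have := card_sdiff_add_card_eq_card (subset_univ S)
  rw [card_univ] at this
  omega

lemma IsTutteBergeWitness.degree_add_one_le [DecidableRel H.Adj] {K : ℕ} {S : Finset V}
    {c : V → V} (h : H.IsTutteBergeWitness K S c) {x : V} (hx : x ∉ S) :
    H.degree x + 1 ≤ #S + #{y ∈ univ \ S | c y = c x} := by
  have hsub : H.neighborFinset x ⊆ (S ∪ {y ∈ univ \ S | c y = c x}).erase x := by
    intro y hy
    rw [mem_neighborFinset] at hy
    by_cases hyS : y ∈ S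
    · simp [hyS, hy.ne']
    · simp [hyS, hy.ne', h.1 x y hx hyS hy]
  have hx' : x ∈ S ∪ {y ∈ univ \ S | c y = c x} := by simp [hx]
  have := card_le_card hsub
  rw [card_erase_of_mem hx'] at this
  have := card_pos.2 ⟨x, hx'⟩
  have := card_union_le S {y ∈ univ \ S | c y = c x}
  rw [card_neighborFinset_eq_degree] at *
  omega

lemma IsTutteBergeWitness.degree_add_degree_le [DecidableRel H.Adj] {K : ℕ} {S : Finset V}
    {c : V → V} (h : H.IsTutteBergeWitness K S c) {u v : V} (hu : u ∉ S) (hv : v ∉ S)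
    (huv : c u ≠ c v) : H.degree u + H.degree v ≤ 2 * K := by
  have := h.degree_add_one_le hu
  have := h.degree_add_one_le hv
  have := card_fiber_add_card_fiber_add_card_image_le (univ \ S) c (by simpa using hu)
    (by simpa using hv) huv
  have := h.card_excess_add_le
  omega

lemma IsTutteBergeWitness.card_offDiag_filter_le {K : ℕ} {S : Finset V} {c : V → V}
    (h : H.IsTutteBergeWitness K S c) :
    #{p ∈ (univ \ S).offDiag | c p.1 = c p.2} ≤ (2 * (K - #S) + 1) * (2 * (K - #S)) := by
  have := h.card_excess_add_le
  refine (card_offDiag_filter_eq_le _ c).trans (Nat.mul_le_mul ?_ ?_) <;> omega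

end TutteBerge

section ColorClasses

variable {V ι : Type*}

def colorClass (G : SimpleGraph V) (col : Sym2 V → ι) (i : ι) : SimpleGraph V :=
  G.deleteEdges {e | col e ≠ i}

variable {G : SimpleGraph V} {col : Sym2 V → ι}

lemma colorClass_adj {i : ι} {x y : V} :
    (G.colorClass col i).Adj x y ↔ G.Adj x y ∧ col s(x, y) = i := by
  simp [colorClass]

instance [DecidableRel G.Adj] [DecidableEq ι] {i : ι} : DecidableRel (G.colorClass col i).Adj :=
  fun _ _ => decidable_of_iff' _ colorClass_adj

lemma IsEdgeMatching.pairwise_vertexDisjoint {H : SimpleGraph V} {M : Finset (Sym2 V)}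
    (hM : H.IsEdgeMatching M) :
    (M : Set (Sym2 V)).Pairwise fun e f => ∀ v : V, ¬(v ∈ e ∧ v ∈ f) :=
  fun e he f hf hne v hv => hne (hM.2 e he f hf v hv.1 hv.2)

lemma mem_edgeSet_colorClass {i : ι} {e : Sym2 V} :
    e ∈ (G.colorClass col i).edgeSet ↔ e ∈ G.edgeSet ∧ col e = i := by
  simp [colorClass, edgeSet_deleteEdges]

variable [Fintype V]

lemma degree_eq_sum_degree_colorClass [Fintype ι] [DecidableEq ι] [DecidableRel G.Adj] (x : V) :
    G.degree x = ∑ i, (G.colorClass col i).degree x := by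
  rw [← card_neighborFinset_eq_degree, card_eq_sum_card_fiberwise (f := fun y => col s(x, y))
    (t := univ) fun _ _ => mem_univ _]
  refine sum_congr rfl fun i _ => ?_
  rw [← card_neighborFinset_eq_degree]
  congr 1
  ext y
  simp [colorClass_adj]

variable [DecidableEq V]

/-- Fewer than `(A + K + 2)(A + K + 1)` ordered pairs share a part for some colour, where
`A = ∑ i, (K - |S i|)`, while at least `A + K + 2` vertices avoid every `S i`. -/
lemma exists_forall_notMem_and_ne [Fintype ι] {K : ℕ} (S : ι → Finset V) (c : ι → V → V)
    (hS : ∀ i, #(S i) ≤ K)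
    (hpairs : ∀ i, #{p ∈ (univ \ S i).offDiag | c i p.1 = c i p.2} ≤
      (2 * (K - #(S i)) + 1) * (2 * (K - #(S i))))
    (hn : (Fintype.card ι + 1) * K + 2 ≤ Fintype.card V) :
    ∃ u v, ∀ i, u ∉ S i ∧ v ∉ S i ∧ c i u ≠ c i v := by
  set W : Finset V := {x | ∀ i, x ∉ S i}
  set A := ∑ i, (K - #(S i))
  have hA : ∑ i, #(S i) + A = Fintype.card ι * K := by
    rw [← sum_add_distrib, sum_congr rfl fun i _ => Nat.add_sub_cancel' (hS i)]
    simp [mul_comm]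
  have hW : A + K + 2 ≤ #W := by
    have hWeq : W = univ \ univ.biUnion S := by ext x; simp [W]
    have := card_biUnion_le (s := univ) (t := S)
    rw [hWeq, card_univ_sdiff]
    rw [add_one_mul] at hn
    omega
  by_contra hnone
  push Not at hnone
  have hsub : W.offDiag ⊆
      univ.biUnion fun i => {p ∈ (univ \ S i).offDiag | c i p.1 = c i p.2} := by
    rintro ⟨u, v⟩ huv
    simp only [mem_offDiag, W, mem_filter, mem_univ, true_and] at huv
    obtain ⟨i, hi⟩ := hnone u v
    exact mem_biUnion.2 ⟨i, mem_univ i,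
      by simp [huv.1 i, huv.2.1 i, huv.2.2, hi (huv.1 i) (huv.2.1 i)]⟩
  have hcount : (A + K + 2) * (A + K + 1) ≤ (4 * K + 2) * A :=
    calc (A + K + 2) * (A + K + 1) ≤ #W * #W - #W := by
          rw [← Nat.mul_sub_one]; exact Nat.mul_le_mul hW (by omega)
      _ = #W.offDiag := (offDiag_card W).symm
      _ ≤ ∑ i, #{p ∈ (univ \ S i).offDiag | c i p.1 = c i p.2} :=
          (card_le_card hsub).trans card_biUnion_le
      _ ≤ ∑ i, (4 * K + 2) * (K - #(S i)) := sum_le_sum fun i _ => (hpairs i).trans <| by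
          have : K - #(S i) ≤ K := Nat.sub_le _ _
          nlinarith
      _ = (4 * K + 2) * A := by rw [← mul_sum]
  zify at hcount
  nlinarith [sq_nonneg ((A : ℤ) - K)]

theorem minDegree_le_mul_of_forall_isEdgeMatching_colorClass [Fintype ι] [DecidableEq ι]
    [DecidableRel G.Adj] (K : ℕ)
    (hK : ∀ i M, (G.colorClass col i).IsEdgeMatching M → #M ≤ K)
    (hn : (Fintype.card ι + 1) * K + 2 ≤ Fintype.card V) :
    G.minDegree ≤ Fintype.card ι * K := by
  choose S c hSc using fun i : ι => exists_isTutteBergeWitness K (G.colorClass col i) (hK i)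
  obtain ⟨u, v, huv⟩ := exists_forall_notMem_and_ne S c
    (fun i => by have := (hSc i).card_excess_add_le; omega)
    (fun i => (hSc i).card_offDiag_filter_le) hn
  have hdeg : G.degree u + G.degree v ≤ 2 * (Fintype.card ι * K) :=
    calc G.degree u + G.degree v
        = ∑ i, ((G.colorClass col i).degree u + (G.colorClass col i).degree v) := by
          rw [degree_eq_sum_degree_colorClass (col := col),
            degree_eq_sum_degree_colorClass (col := col), sum_add_distrib]
      _ ≤ ∑ _i : ι, 2 * K := sum_le_sum fun i _ =>
          (hSc i).degree_add_degree_le (huv i).1 (huv i).2.1 (huv i).2.2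
      _ = 2 * (Fintype.card ι * K) := by simp [mul_left_comm]
  have := G.minDegree_le_degree u
  have := G.minDegree_le_degree v
  omega

end ColorClasses

end SimpleGraph

open SimpleGraph

/-- Let `G` be an `n`-vertex graph with an `r`-edge-colouring, and suppose the minimum
degree satisfies `δ(G) ≤ rn/(r+1)`.  Then `G` contains a monochromatic matching with
at least `δ(G)/r` edges, i.e. a colour `i` and a matching `M` of colour-`i` edges
with `r * |M| ≥ δ(G)`. -/
theorem stmt_3 {V : Type*} [Fintype V] [DecidableEq V] (G : SimpleGraph V)
    [DecidableRel G.Adj] (r : ℕ) (hr : 1 ≤ r) (col : Sym2 V → Fin r)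
    (hδ : (r + 1) * G.minDegree ≤ r * Fintype.card V) :
    ∃ (i : Fin r) (M : Finset (Sym2 V)), ↑M ⊆ G.edgeSet ∧
      (M : Set (Sym2 V)).Pairwise (fun e f => ∀ v : V, ¬(v ∈ e ∧ v ∈ f)) ∧
      (∀ e ∈ M, col e = i) ∧ G.minDegree ≤ r * M.card := by
  by_cases hδ0 : G.minDegree = 0
  · exact ⟨⟨0, hr⟩, ∅, by simp, by simp, by simp, by omega⟩
  by_contra hcon
  set K := (G.minDegree - 1) / r
  have hrK : r * K ≤ G.minDegree - 1 := Nat.mul_div_le _ _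
  have hK : ∀ i M, (G.colorClass col i).IsEdgeMatching M → #M ≤ K := fun i M hM => by
    by_contra hlt
    refine hcon ⟨i, M, fun e he => (mem_edgeSet_colorClass.1 (hM.1 he)).1,
      hM.pairwise_vertexDisjoint, fun e he => (mem_edgeSet_colorClass.1 (hM.1 he)).2, ?_⟩
    have := (Nat.div_lt_iff_lt_mul hr).1 (not_le.1 hlt)
    rw [mul_comm] at this
    omega
  have hn : (r + 1) * K + 2 ≤ Fintype.card V := by
    by_contra h
    nlinarith [Nat.mul_le_mul_left r (show Fintype.card V ≤ (r + 1) * K + 1 by omega),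
      Nat.mul_le_mul_left (r + 1) (show r * K + 1 ≤ G.minDegree by omega)]
  have := minDegree_le_mul_of_forall_isEdgeMatching_colorClass K hK (by simpa using hn)
  rw [Fintype.card_fin] at this
  omega
end

section
/- Let B be a finite bipartite graph with vertex classes X and Y such that for every subset Z ⊆ Y we have |N(Z)| ≥ 2|Z|. Then B contains two matchings M₁ and M₂, each covering every vertex of Y, such that the sets V(M₁) ∩ X and V(M₂) ∩ X are disjoint. -/
/-!
Split every vertex `y ∈ Y` into two copies `(y, true)` and `(y, false)`, each adjacent to the
neighbours of `y`. A set `S` of copies has the neighbourhood of its projection `Z ⊆ Y`, and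
`|S| ≤ 2|Z| ≤ |N(Z)|`, so Hall's theorem gives an injection from the copies into `X` along edges.
Its restrictions to the two layers are the required matchings.
-/

open Finset

theorem Finset.card_le_card_image_fst_mul {β ι : Type*} [DecidableEq β] [Fintype ι]
    (s : Finset (β × ι)) : #s ≤ #(s.image Prod.fst) * Fintype.card ι := by
  calc #s ≤ #(s.image Prod.fst ×ˢ (univ : Finset ι)) :=
        card_le_card fun p hp => mem_product.2 ⟨mem_image_of_mem _ hp, mem_univ _⟩
    _ = #(s.image Prod.fst) * Fintype.card ι := by rw [card_product, card_univ]

theorem exists_injective_prod_of_card_mul_le_ncard_neighbors {α β ι : Type*} [Fintype α]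
    [Fintype β] [Fintype ι] (R : α → β → Prop)
    (h : ∀ Z : Finset β, Fintype.card ι * #Z ≤ {x : α | ∃ y ∈ Z, R x y}.ncard) :
    ∃ g : β × ι → α, Function.Injective g ∧ ∀ p, R (g p) p.1 := by
  classical
  let t : β × ι → Finset α := fun p => {x | R x p.1}
  have hall : ∀ s : Finset (β × ι), #s ≤ #(s.biUnion t) := by
    intro s
    have neighbors_eq : {x : α | ∃ y ∈ s.image Prod.fst, R x y}.ncard = #(s.biUnion t) := by
      rw [Set.ncard_eq_toFinset_card']
      congr 1
      ext x
      simp [t]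
    calc #s ≤ #(s.image Prod.fst) * Fintype.card ι := s.card_le_card_image_fst_mul
      _ ≤ #(s.biUnion t) := by rw [mul_comm, ← neighbors_eq]; exact h _
  obtain ⟨g, hg, hgt⟩ := (all_card_le_biUnion_card_iff_existsInjective' t).1 hall
  exact ⟨g, hg, fun p => by simpa [t] using hgt p⟩

/-- Bigamy variant of Hall's theorem: let `B` be a finite bipartite graph with parts
`α` (playing the role of `X`) and `β` (playing the role of `Y`), given by the
adjacency relation `R`.  If `|N(Z)| ≥ 2|Z|` for every `Z ⊆ Y`, then there are two
matchings covering `Y` (encoded as injections `f₁ f₂ : β → α` matching each `y` to a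
neighbour) whose sets of used `X`-vertices are disjoint. -/
theorem stmt_6 {α β : Type*} [Fintype α] [Fintype β] (R : α → β → Prop)
    (h : ∀ Z : Finset β, 2 * Z.card ≤ {x : α | ∃ y ∈ Z, R x y}.ncard) :
    ∃ f₁ f₂ : β → α, Function.Injective f₁ ∧ Function.Injective f₂ ∧
      (∀ y, R (f₁ y) y) ∧ (∀ y, R (f₂ y) y) ∧ ∀ y y', f₁ y ≠ f₂ y' := by
  obtain ⟨g, hg, hgR⟩ := exists_injective_prod_of_card_mul_le_ncard_neighbors (ι := Bool) R h
  refine ⟨fun y => g (y, true), fun y => g (y, false), hg.comp (Prod.mk_left_injective _),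
    hg.comp (Prod.mk_left_injective _), fun y => hgR _, fun y => hgR _, fun y y' hyy' => ?_⟩
  exact Bool.noConfusion (congrArg Prod.snd (hg hyy'))
end

section
/- Let n, r ≥ 2 be integers and let α ∈ [1/2 + 1/(2r), 1) with αn an integer. Partition n vertices into sets V₁,…,V_r with |V_r| = αn and the remaining (1−α)n vertices distributed as evenly as possible among V₁,…,V_{r−1}. Let F be the graph whose edges are all pairs intersecting V_r, coloured so that edges between V_i and V_r get colour i (for i ≤ r−1) and edges inside V_r get colour r. Then F has minimum degree αn, and every Hamilton cycle of F contains exactly (2α−1)n edges of colour r and exactly 2|V_i| edges of colour i for each i ∈ [r−1]. -/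
/-!
In `F` a vertex of `P ℓ` is adjacent to every other vertex and a vertex outside `P ℓ` exactly
to `P ℓ`, so the minimum degree is `|P ℓ|`. For the colour counts, double count incidences: a
Hamilton cycle passes through each vertex on exactly two of its edges, so its edges meet any
vertex set `S` in `2|S|` incidences in total. An edge of `F` meets `P i` (`i ≠ ℓ`) in one vertex
if it has colour `i` and in none otherwise, and meets `P ℓ` in two vertices if it has colour `ℓ`
and in one otherwise; taking `S = P i` and `S = P ℓ` gives the two counts.
-/

open SimpleGraph Finset

theorem List.sum_map_boole {α : Type*} (p : α → Prop) [DecidablePred p] (l : List α) :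
    (l.map fun a => if p a then 1 else 0).sum = l.countP (p ·) := by
  induction l with
  | nil => rfl
  | cons a l ih => rw [List.map_cons, List.sum_cons, ih, List.countP_cons, add_comm]; simp

namespace SimpleGraph

variable {V : Type*} {G : SimpleGraph V}

theorem card_filter_mem_sym2_mk [DecidableEq V] (S : Finset V) {x y : V} (hxy : x ≠ y) :
    #{w ∈ S | w ∈ s(x, y)} = (if x ∈ S then 1 else 0) + (if y ∈ S then 1 else 0) := by
  simp only [Sym2.mem_iff]
  rw [filter_or, card_union_of_disjoint, filter_eq', filter_eq']
  · split_ifs <;> rfl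
  · exact disjoint_filter.mpr fun w _ hx hy => hxy (hx.symm.trans hy)

namespace Walk

variable [DecidableEq V]

/-- Each vertex of the walk is met by the edge entering it and the edge leaving it; the two
endpoint terms stand in for the edges missing at the ends. -/
theorem sum_card_filter_mem_edges_add (S : Finset V) {u v : V} (p : G.Walk u v) :
    (p.edges.map fun e => #{w ∈ S | w ∈ e}).sum + (if u ∈ S then 1 else 0) +
      (if v ∈ S then 1 else 0) = 2 * p.support.countP (· ∈ S) := by
  induction p with
  | nil => simp only [edges_nil, support_nil, List.countP_singleton]; split_ifs <;> simp_all
  | cons h q ih =>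
    rw [edges_cons, List.map_cons, List.sum_cons, card_filter_mem_sym2_mk S h.ne,
      support_cons, List.countP_cons, mul_add, ← ih]
    simp only [decide_eq_true_eq]
    split_ifs <;> omega

theorem IsHamiltonian.countP_support {u v : V} {p : G.Walk u v} (hp : p.IsHamiltonian)
    (S : Finset V) : p.support.countP (· ∈ S) = #S := by
  rw [List.countP_eq_length_filter,
    ← List.toFinset_card_of_nodup (hp.isPath.support_nodup.filter _)]
  congr 1
  ext w
  simp [hp.mem_support]

theorem IsHamiltonianCycle.sum_card_filter_mem_edges {v : V} {c : G.Walk v v}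
    (hc : c.IsHamiltonianCycle) (S : Finset V) :
    (c.edges.map fun e => #{w ∈ S | w ∈ e}).sum = 2 * #S := by
  have h := sum_card_filter_mem_edges_add S c
  rw [← c.cons_support_tail hc.isCycle.not_nil, List.countP_cons,
    hc.isHamiltonian_tail.countP_support] at h
  simp only [decide_eq_true_eq] at h
  split_ifs at h <;> omega

end Walk

section PairsMeetingSet

variable {A : Finset V} (hadj : ∀ u v, G.Adj u v ↔ u ≠ v ∧ (u ∈ A ∨ v ∈ A))
include hadj

theorem forall_edgeSet_of_adj_iff {Q : Sym2 V → Prop}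
    (hQ : ∀ u w, G.Adj u w → u ∈ A → Q s(u, w)) : ∀ e ∈ G.edgeSet, Q e := by
  intro e
  induction e using Sym2.ind with
  | _ u w =>
    intro he
    rcases ((hadj u w).mp he).2 with hu | hw
    · exact hQ u w he hu
    · rw [Sym2.eq_swap]; exact hQ w u he.symm hw

variable [Fintype V] [DecidableRel G.Adj]

theorem degree_of_mem_of_adj_iff {v : V} (hv : v ∈ A) : G.degree v = Fintype.card V - 1 := by
  classical
  rw [← card_neighborFinset_eq_degree, ← card_univ, ← card_erase_of_mem (mem_univ v)]
  congr 1
  ext u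
  simp [hadj, hv, eq_comm]

theorem degree_of_notMem_of_adj_iff {v : V} (hv : v ∉ A) : G.degree v = #A := by
  rw [← card_neighborFinset_eq_degree]
  congr 1
  ext u
  simp only [mem_neighborFinset, hadj, hv, false_or]
  exact ⟨And.right, fun hu => ⟨fun h => hv (h ▸ hu), hu⟩⟩

theorem minDegree_eq_card_of_adj_iff {v₀ : V} (hv₀ : v₀ ∉ A) : G.minDegree = #A := by
  have : Nonempty V := ⟨v₀⟩
  refine le_antisymm (degree_of_notMem_of_adj_iff hadj hv₀ ▸ G.minDegree_le_degree v₀) ?_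
  have hA : #A < Fintype.card V := card_lt_univ_of_notMem hv₀
  refine G.le_minDegree_of_forall_le_degree _ fun v => ?_
  by_cases hv : v ∈ A
  · rw [degree_of_mem_of_adj_iff hadj hv]; omega
  · rw [degree_of_notMem_of_adj_iff hadj hv]

end PairsMeetingSet

section EdgeColouring

variable [DecidableEq V] {r : ℕ} {P : Fin r → Finset V} {ℓ : Fin r} {col : Sym2 V → Fin r}
  (hadj : ∀ u v, G.Adj u v ↔ u ≠ v ∧ (u ∈ P ℓ ∨ v ∈ P ℓ))
  (hcover : ∀ v : V, ∃ i, v ∈ P i)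
  (hcol₁ : ∀ u v, G.Adj u v → u ∈ P ℓ → v ∈ P ℓ → col s(u, v) = ℓ)
  (hcol₂ : ∀ u v, G.Adj u v → ∀ i, i ≠ ℓ → u ∈ P i → col s(u, v) = i)
include hadj hcover hcol₁ hcol₂

theorem card_filter_mem_edge_self :
    ∀ e ∈ G.edgeSet, #{w ∈ P ℓ | w ∈ e} = 1 + if col e = ℓ then 1 else 0 := by
  refine forall_edgeSet_of_adj_iff hadj fun u w huw hu => ?_
  rw [card_filter_mem_sym2_mk _ huw.ne, if_pos hu]
  by_cases hw : w ∈ P ℓ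
  · rw [if_pos hw, if_pos (hcol₁ u w huw hu hw)]
  · obtain ⟨j, hj⟩ := hcover w
    have hjℓ : j ≠ ℓ := by rintro rfl; exact hw hj
    rw [if_neg hw, Sym2.eq_swap, hcol₂ w u huw.symm j hjℓ hj, if_neg hjℓ]

theorem card_filter_mem_edge_of_ne (hdisj : ∀ i j, i ≠ j → Disjoint (P i) (P j))
    {i : Fin r} (hi : i ≠ ℓ) :
    ∀ e ∈ G.edgeSet, #{w ∈ P i | w ∈ e} = if col e = i then 1 else 0 := by
  have hnotMem : ∀ {w}, w ∈ P ℓ → w ∉ P i := fun hw hwi =>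
    Finset.disjoint_left.mp (hdisj i ℓ hi) hwi hw
  refine forall_edgeSet_of_adj_iff hadj fun u w huw hu => ?_
  rw [card_filter_mem_sym2_mk _ huw.ne, if_neg (hnotMem hu), zero_add]
  by_cases hw : w ∈ P ℓ
  · rw [if_neg (hnotMem hw), hcol₁ u w huw hu hw, if_neg hi.symm]
  · obtain ⟨j, hj⟩ := hcover w
    have hjℓ : j ≠ ℓ := by rintro rfl; exact hw hj
    have hwi : w ∈ P i ↔ j = i := ⟨fun hwi => by_contra fun hji =>
      Finset.disjoint_left.mp (hdisj j i hji) hj hwi, fun hji => hji ▸ hj⟩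
    rw [Sym2.eq_swap, hcol₂ w u huw.symm j hjℓ hj]
    simp only [hwi]

end EdgeColouring

end SimpleGraph

theorem stmt_10_general {V : Type*} [Fintype V] [DecidableEq V]
    (r : ℕ) (a : ℕ)
    (hα₂ : a < Fintype.card V)
    (P : Fin r → Finset V) (ℓ : Fin r)
    (hdisj : ∀ i j, i ≠ j → Disjoint (P i) (P j))
    (hcover : ∀ v : V, ∃ i, v ∈ P i)
    (hsizeℓ : (P ℓ).card = a)
    (F : SimpleGraph V) [DecidableRel F.Adj]
    (hadj : ∀ u v, F.Adj u v ↔ u ≠ v ∧ (u ∈ P ℓ ∨ v ∈ P ℓ))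
    (col : Sym2 V → Fin r)
    (hcol₁ : ∀ u v, F.Adj u v → u ∈ P ℓ → v ∈ P ℓ → col s(u, v) = ℓ)
    (hcol₂ : ∀ u v, F.Adj u v → ∀ i, i ≠ ℓ → u ∈ P i → col s(u, v) = i) :
    F.minDegree = a ∧
    ∀ (v : V) (c : F.Walk v v), c.IsHamiltonianCycle →
      ((c.edges.filter fun e => decide (col e = ℓ)).length + Fintype.card V = 2 * a ∧
       ∀ i, i ≠ ℓ →
        (c.edges.filter fun e => decide (col e = i)).length = 2 * (P i).card) := by
  obtain ⟨v₀, hv₀⟩ : ∃ v, v ∉ P ℓ := by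
    by_contra! h
    rw [eq_univ_iff_forall.mpr h, card_univ] at hsizeℓ
    omega
  refine ⟨hsizeℓ ▸ minDegree_eq_card_of_adj_iff hadj hv₀, fun v c hc => ⟨?_, fun i hi => ?_⟩⟩
  · have h := hc.sum_card_filter_mem_edges (P ℓ)
    rw [List.map_congr_left fun e he => card_filter_mem_edge_self hadj hcover hcol₁ hcol₂ e
      (c.edges_subset_edgeSet he), List.sum_map_add, List.sum_map_boole] at h
    simp only [List.map_const', List.sum_replicate, Walk.length_edges, hc.length_eq,
      smul_eq_mul, mul_one] at h
    rw [← List.countP_eq_length_filter]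
    omega
  · rw [← List.countP_eq_length_filter, ← hc.sum_card_filter_mem_edges (P i),
      List.map_congr_left fun e he => card_filter_mem_edge_of_ne hadj hcover hcol₁ hcol₂ hdisj hi
        e (c.edges_subset_edgeSet he), List.sum_map_boole]

/-- Construction 2.1.  Let `n, r ≥ 2`, `α ∈ [1/2 + 1/(2r), 1)` with `a = αn` an
integer.  Partition the `n` vertices into parts `P i` (`i : Fin r`) with a
distinguished part `P ℓ` of size `a`, the others of size `⌊(n−a)/(r−1)⌋` or
`⌈(n−a)/(r−1)⌉`.  Let `F` have as edges all pairs meeting `P ℓ`, coloured so that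
edges between `P i` and `P ℓ` (for `i ≠ ℓ`) get colour `i` and edges inside `P ℓ`
get colour `ℓ`.  Then `F` has minimum degree `a = αn`, and every Hamilton cycle of
`F` contains exactly `(2α−1)n = 2a − n` edges of colour `ℓ` and exactly `2|P i|`
edges of each colour `i ≠ ℓ`. -/
theorem stmt_10 {V : Type*} [Fintype V] [DecidableEq V]
    (r : ℕ) (hr : 2 ≤ r) (a : ℕ)
    (hα₁ : (Fintype.card V : ℝ) * (1 / 2 + 1 / (2 * r)) ≤ a)
    (hα₂ : a < Fintype.card V)
    (P : Fin r → Finset V) (ℓ : Fin r)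
    (hdisj : ∀ i j, i ≠ j → Disjoint (P i) (P j))
    (hcover : ∀ v : V, ∃ i, v ∈ P i)
    (hsizeℓ : (P ℓ).card = a)
    (hsizes : ∀ i, i ≠ ℓ →
      (P i).card = (Fintype.card V - a) / (r - 1) ∨
      (P i).card = (Fintype.card V - a + (r - 2)) / (r - 1))
    (F : SimpleGraph V) [DecidableRel F.Adj]
    (hadj : ∀ u v, F.Adj u v ↔ u ≠ v ∧ (u ∈ P ℓ ∨ v ∈ P ℓ))
    (col : Sym2 V → Fin r)
    (hcol₁ : ∀ u v, F.Adj u v → u ∈ P ℓ → v ∈ P ℓ → col s(u, v) = ℓ)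
    (hcol₂ : ∀ u v, F.Adj u v → ∀ i, i ≠ ℓ → u ∈ P i → col s(u, v) = i) :
    F.minDegree = a ∧
    ∀ (v : V) (c : F.Walk v v), c.IsHamiltonianCycle →
      ((c.edges.filter fun e => decide (col e = ℓ)).length + Fintype.card V = 2 * a ∧
       ∀ i, i ≠ ℓ →
        (c.edges.filter fun e => decide (col e = i)).length = 2 * (P i).card) :=
  stmt_10_general r a hα₂ P ℓ hdisj hcover hsizeℓ F hadj col hcol₁ hcol₂
end

section
/- Let n, r ≥ 2 and α ∈ (0, 1) with αn an integer. Partition n vertices into sets V₁,…,V_{r+1} with |V_{r+1}| = (1−α)n and |V_i| ∈ {⌊αn/r⌋, ⌈αn/r⌉} for i ∈ [r], and let F be the graph whose edges are all pairs meeting ∪_{i∈[r]} V_i, coloured so that for i ≤ j ≤ r every edge between V_i and V_j has colour i and every edge between V_i and V_{r+1} has colour i. Then F has minimum degree αn, every Hamilton cycle of F contains at most 2⌈αn/r⌉ edges of any single colour, and (for n even) every perfect matching contains at most ⌈αn/r⌉ edges of any single colour. -/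
/-!
Colour `i` consists of edges with an endpoint in part `i` and the other endpoint in a part of
index at least `i`, so every colour-`i` edge meets `V_i`. A Hamilton cycle meets each vertex in
two edges and a perfect matching in one, so double counting over `V_i` bounds the number of
colour-`i` edges by `2|V_i|`, respectively `|V_i|`, and `|V_i| ≤ ⌈a/r⌉`. The minimum degree is
attained in the last part, whose vertices are adjacent exactly to the `a` vertices outside it.
-/

open SimpleGraph

theorem List.Nodup.length_filter_eq_ncard {α : Type*} {l : List α} (hl : l.Nodup)
    (q : α → Prop) [DecidablePred q] :
    (l.filter (q ·)).length = {x | x ∈ l ∧ q x}.ncard := by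
  classical
  rw [← List.toFinset_card_of_nodup (hl.filter _), ← Set.ncard_coe_finset]
  congr 1
  ext
  simp

namespace SimpleGraph

variable {V : Type*} {G : SimpleGraph V}

theorem Subgraph.ncard_le_ncard_mul_of_forall_exists_mem [Finite V] {H : G.Subgraph} {d : ℕ}
    (hdeg : ∀ v, (H.neighborSet v).ncard ≤ d) {S : Set (Sym2 V)} (hS : S ⊆ H.edgeSet)
    {T : Set V} (hST : ∀ e ∈ S, ∃ v ∈ e, v ∈ T) : S.ncard ≤ T.ncard * d := by
  set T' := T.toFinite.toFinset
  have hcover : S ⊆ ⋃ v ∈ T', (fun w => s(v, w)) '' H.neighborSet v := by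
    intro e he
    obtain ⟨v, hve, hvT⟩ := hST e he
    obtain ⟨w, rfl⟩ := Sym2.mem_iff_exists.mp hve
    simp only [Set.mem_iUnion, Set.mem_image]
    exact ⟨v, T.toFinite.mem_toFinset.mpr hvT, w, hS he, rfl⟩
  calc S.ncard ≤ (⋃ v ∈ T', (fun w => s(v, w)) '' H.neighborSet v).ncard :=
        Set.ncard_le_ncard hcover
    _ ≤ ∑ v ∈ T', ((fun w => s(v, w)) '' H.neighborSet v).ncard := T'.set_ncard_biUnion_le _
    _ ≤ ∑ _v ∈ T', d := Finset.sum_le_sum fun v _ =>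
        (Set.ncard_image_le (Set.toFinite _)).trans (hdeg v)
    _ = T.ncard * d := by rw [Finset.sum_const, smul_eq_mul, Set.ncard_eq_toFinset_card T]

theorem Walk.IsHamiltonianCycle.ncard_neighborSet_toSubgraph_eq_two [DecidableEq V] {u : V}
    {c : G.Walk u u} (hc : c.IsHamiltonianCycle) (v : V) :
    (c.toSubgraph.neighborSet v).ncard = 2 :=
  hc.isCycle.ncard_neighborSet_toSubgraph_eq_two (hc.mem_support v)

theorem Subgraph.IsPerfectMatching.ncard_neighborSet_eq_one {M : G.Subgraph}
    (hM : M.IsPerfectMatching) (v : V) : (M.neighborSet v).ncard = 1 := by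
  obtain ⟨w, hw, huniq⟩ := Subgraph.isPerfectMatching_iff.mp hM v
  exact Set.ncard_eq_one.mpr ⟨w, Set.eq_singleton_iff_unique_mem.mpr ⟨hw, huniq⟩⟩

theorem minDegree_eq_ncard_of_adj_iff [Fintype V] [DecidableRel G.Adj] {A : Set V}
    (hadj : ∀ u v, G.Adj u v ↔ u ≠ v ∧ (u ∈ A ∨ v ∈ A)) {v₀ : V} (hv₀ : v₀ ∉ A) :
    G.minDegree = A.ncard := by
  have hdeg v : G.degree v = (G.neighborSet v).ncard := by
    rw [← card_neighborSet_eq_degree, ← Nat.card_eq_fintype_card, Nat.card_coe_set_eq]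
  have hout {v} (hv : v ∉ A) : G.neighborSet v = A := by
    ext w
    simp only [mem_neighborSet, hadj, hv, false_or]
    exact ⟨And.right, fun hw => ⟨fun h => hv (h ▸ hw), hw⟩⟩
  have hin {v} (hv : v ∈ A) : G.neighborSet v = {v}ᶜ := by
    ext w
    simp only [mem_neighborSet, hadj, hv, true_or, and_true, Set.mem_compl_singleton_iff]
    exact ne_comm
  have hle v : A.ncard ≤ G.degree v := by
    by_cases hv : v ∈ A
    · calc A.ncard ≤ ({v₀}ᶜ : Set V).ncard :=
            Set.ncard_le_ncard fun w hw =>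
              Set.mem_compl_singleton_iff.mpr (ne_of_mem_of_not_mem hw hv₀)
        _ = G.degree v := by
          rw [hdeg, hin hv, Set.ncard_compl, Set.ncard_compl, Set.ncard_singleton,
            Set.ncard_singleton]
    · rw [hdeg, hout hv]
  have : Nonempty V := ⟨v₀⟩
  refine le_antisymm ?_ (G.le_minDegree_of_forall_le_degree _ hle)
  calc G.minDegree ≤ G.degree v₀ := G.minDegree_le_degree v₀
    _ = A.ncard := by rw [hdeg, hout hv₀]

theorem exists_mem_eq_castSucc_of_col_eq {r : ℕ} {p : V → Fin (r + 1)} {col : Sym2 V → Fin r}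
    (hcol : ∀ u v, G.Adj u v → (col s(u, v) : ℕ) = min (p u : ℕ) (p v : ℕ))
    {e : Sym2 V} (he : e ∈ G.edgeSet) {k : Fin r} (hk : col e = k) :
    ∃ v ∈ e, p v = k.castSucc := by
  induction e using Sym2.ind with
  | _ u w =>
    have hmin := hcol u w he
    rw [hk] at hmin
    rcases le_total (p u : ℕ) (p w : ℕ) with hle | hle
    · exact ⟨u, Sym2.mem_mk_left u w, Fin.ext (by simp [hmin, hle])⟩
    · exact ⟨w, Sym2.mem_mk_right u w, Fin.ext (by simp [hmin, hle])⟩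

end SimpleGraph

theorem stmt_11_general {V : Type*} [Fintype V] [DecidableEq V]
    (r : ℕ) (a : ℕ) (ha₁ : a < Fintype.card V)
    (p : V → Fin (r + 1))
    (hlast : {v | p v = Fin.last r}.ncard = Fintype.card V - a)
    (hsizes : ∀ i : Fin (r + 1), i ≠ Fin.last r →
      {v | p v = i}.ncard = a / r ∨ {v | p v = i}.ncard = (a + r - 1) / r)
    (F : SimpleGraph V) [DecidableRel F.Adj]
    (hadj : ∀ u v, F.Adj u v ↔ u ≠ v ∧ (p u ≠ Fin.last r ∨ p v ≠ Fin.last r))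
    (col : Sym2 V → Fin r)
    (hcol : ∀ u v, F.Adj u v → (col s(u, v) : ℕ) = min (p u : ℕ) (p v : ℕ)) :
    F.minDegree = a ∧
    (∀ (v : V) (c : F.Walk v v), c.IsHamiltonianCycle →
      ∀ k : Fin r,
        (c.edges.filter fun e => decide (col e = k)).length ≤ 2 * ((a + r - 1) / r)) ∧
    (Even (Fintype.card V) → ∀ M : F.Subgraph, M.IsPerfectMatching →
      ∀ k : Fin r, {e ∈ M.edgeSet | col e = k}.ncard ≤ (a + r - 1) / r) := by
  have hpart (k : Fin r) : {v | p v = k.castSucc}.ncard ≤ (a + r - 1) / r := by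
    rcases hsizes _ k.castSucc_ne_last with h | h <;> rw [h]
    exact Nat.div_le_div_right (by have := k.pos; omega)
  refine ⟨?_, fun v c hc k => ?_, fun _ M hM k => ?_⟩
  · obtain ⟨v₀, hv₀⟩ : {v | p v = Fin.last r}.Nonempty :=
      Set.nonempty_of_ncard_ne_zero (by omega)
    have hA : {v | p v = Fin.last r}ᶜ.ncard = a := by
      rw [Set.ncard_compl, hlast, Nat.card_eq_fintype_card]
      omega
    exact hA ▸ minDegree_eq_ncard_of_adj_iff (by simpa using hadj) (by simpa using hv₀)
  · rw [hc.isCycle.edges_nodup.length_filter_eq_ncard]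
    calc _ ≤ {v | p v = k.castSucc}.ncard * 2 :=
          c.toSubgraph.ncard_le_ncard_mul_of_forall_exists_mem
            (fun v => (hc.ncard_neighborSet_toSubgraph_eq_two v).le)
            (fun e he => by simpa [Walk.edgeSet_toSubgraph] using he.1)
            (fun e he =>
              exists_mem_eq_castSucc_of_col_eq hcol (c.edges_subset_edgeSet he.1) he.2)
      _ ≤ 2 * ((a + r - 1) / r) := by linarith [hpart k]
  · calc _ ≤ {v | p v = k.castSucc}.ncard * 1 :=
          M.ncard_le_ncard_mul_of_forall_exists_mem
            (fun v => (hM.ncard_neighborSet_eq_one v).le) (fun e he => he.1)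
            (fun e he => exists_mem_eq_castSucc_of_col_eq hcol (M.edgeSet_subset he.1) he.2)
      _ ≤ (a + r - 1) / r := by simpa using hpart k

/-- Construction 2.2.  Let `n, r ≥ 2` and `α ∈ (0,1)` with `a = αn` an integer.
Partition the vertices by `p : V → Fin (r+1)` with the last part of size `n − a` and
the other parts of size `⌊a/r⌋` or `⌈a/r⌉`.  Let `F` have as edges all pairs meeting
the union of the first `r` parts, and colour an edge by the minimum of the part
indices of its endpoints.  Then `F` has minimum degree `a = αn`, every Hamilton
cycle of `F` has at most `2⌈a/r⌉` edges of any single colour, and (for `n` even)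
every perfect matching has at most `⌈a/r⌉` edges of any single colour. -/
theorem stmt_11 {V : Type*} [Fintype V] [DecidableEq V]
    (r : ℕ) (hr : 2 ≤ r) (a : ℕ) (ha₀ : 0 < a) (ha₁ : a < Fintype.card V)
    (p : V → Fin (r + 1))
    (hlast : {v | p v = Fin.last r}.ncard = Fintype.card V - a)
    (hsizes : ∀ i : Fin (r + 1), i ≠ Fin.last r →
      {v | p v = i}.ncard = a / r ∨ {v | p v = i}.ncard = (a + r - 1) / r)
    (F : SimpleGraph V) [DecidableRel F.Adj]
    (hadj : ∀ u v, F.Adj u v ↔ u ≠ v ∧ (p u ≠ Fin.last r ∨ p v ≠ Fin.last r))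
    (col : Sym2 V → Fin r)
    (hcol : ∀ u v, F.Adj u v → (col s(u, v) : ℕ) = min (p u : ℕ) (p v : ℕ)) :
    F.minDegree = a ∧
    (∀ (v : V) (c : F.Walk v v), c.IsHamiltonianCycle →
      ∀ k : Fin r,
        (c.edges.filter fun e => decide (col e = k)).length ≤ 2 * ((a + r - 1) / r)) ∧
    (Even (Fintype.card V) → ∀ M : F.Subgraph, M.IsPerfectMatching →
      ∀ k : Fin r, {e ∈ M.edgeSet | col e = k}.ncard ≤ (a + r - 1) / r) :=
  stmt_11_general r a ha₁ p hlast hsizes F hadj col hcol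
end

section
/- Let n and r ≥ 2 be integers. Partition the complete graph K_n into parts V₁,…,V_{r+1} of sizes ⌊n/(r+1)⌋ or ⌈n/(r+1)⌉ with |V_{r+1}| = ⌈n/(r+1)⌉, and colour the edges so that edges inside V_i get colour i for i ∈ [r], edges inside V_{r+1} get colour r, and edges between V_i and V_j with i < j get colour i. Then every Hamilton cycle of K_n contains at most 2⌈(n−1)/(r+1)⌉ edges of the same colour, and the maximum monochromatic matching has size at most ⌈(n−1)/(r+1)⌉. -/
/-
Parts and colours are indexed from `0`. For a colour `k < r - 1` every edge of colour `k` meets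
the part `V_k`, and a part other than the last has at most `⌈(n - 1)/(r + 1)⌉` vertices: two
parts of size `⌈n/(r + 1)⌉ > ⌈(n - 1)/(r + 1)⌉` would leave too few vertices for the others.
Since every vertex lies on two edges of a Hamilton cycle and on at most one edge of a matching,
this gives both bounds. Edges of the last colour `r - 1` lie inside `S = V_{r-1} ∪ V_r`, of size
at most `2⌈(n - 1)/(r + 1)⌉ + 1`. A matching inside `S` has at most `|S|/2` edges. A Hamilton
cycle also visits a vertex outside `S` (`r ≥ 2` and `n ≥ 3`), so it has an edge leaving `S` and
hence fewer than `|S|` edges inside `S`.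
-/

open SimpleGraph Finset

theorem List.Nodup.card_filter_toFinset {α : Type*} [DecidableEq α] {l : List α} (hl : l.Nodup)
    (p : α → Prop) [DecidablePred p] : #{a ∈ l.toFinset | p a} = l.countP (p ·) := by
  rw [List.countP_eq_length_filter, ← List.toFinset_card_of_nodup (hl.filter _)]
  congr 1
  ext
  simp

namespace Finset

variable {V : Type*} [DecidableEq V]

theorem card_le_mul_card_of_forall_exists_mem {F : Finset (Sym2 V)} {A : Finset V} {d : ℕ}
    (hA : ∀ e ∈ F, ∃ v ∈ A, v ∈ e) (hdeg : ∀ v ∈ A, #{e ∈ F | v ∈ e} ≤ d) :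
    #F ≤ d * #A := by
  have := card_mul_le_card_mul (fun e v => v ∈ e) (m := 1) (s := F) (t := A)
    (fun e he => card_pos.2 <| by simpa [bipartiteAbove, Finset.Nonempty] using hA e he) hdeg
  rwa [mul_one, mul_comm] at this

theorem two_mul_card_eq_sum_card_filter_mem {F : Finset (Sym2 V)} {S : Finset V}
    (hF : ∀ e ∈ F, ¬e.IsDiag) (hS : ∀ e ∈ F, ∀ v ∈ e, v ∈ S) :
    2 * #F = ∑ v ∈ S, #{e ∈ F | v ∈ e} := by
  calc 2 * #F = ∑ e ∈ F, #(S.bipartiteAbove (fun e v => v ∈ e) e) := by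
        rw [mul_comm, ← smul_eq_mul, ← sum_const]
        refine sum_congr rfl fun e he => ?_
        rw [← Sym2.card_toFinset_of_not_isDiag e (hF e he)]
        congr 1
        ext v
        simpa [bipartiteAbove] using hS e he v
    _ = _ := sum_card_bipartiteAbove_eq_sum_card_bipartiteBelow _

end Finset

namespace SimpleGraph.Walk

variable {V : Type*} {G : SimpleGraph V}

theorem exists_mem_edges_boundary {u v a b : V} (c : G.Walk u v) (S : Set V)
    (ha : a ∈ c.support) (hb : b ∈ c.support) (haS : a ∈ S) (hbS : b ∉ S) :
    ∃ x y, s(x, y) ∈ c.edges ∧ x ∈ S ∧ y ∉ S := by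
  classical
  obtain ⟨d, hd, hdS⟩ :=
    ((c.takeUntil a ha).reverse.append (c.takeUntil b hb)).exists_boundary_dart S haS hbS
  refine ⟨d.fst, d.snd, ?_, hdS⟩
  have hd' := List.mem_map_of_mem (f := Dart.edge) hd
  rw [← edges, edges_append, edges_reverse, List.mem_append, List.mem_reverse] at hd'
  exact hd'.elim (c.edges_takeUntil_subset_edges ha ·) (c.edges_takeUntil_subset_edges hb ·)

variable [DecidableEq V]

theorem IsPath.countP_mem_edges_eq_one {x y : V} {q : G.Walk y x} (hq : q.IsPath) (hyx : y ≠ x) :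
    q.edges.countP (x ∈ ·) = 1 := by
  induction q with
  | nil => exact absurd rfl hyx
  | @cons a b c h q ih =>
    rw [edges_cons, List.countP_cons]
    by_cases hbc : b = c
    · subst hbc
      obtain rfl := eq_nil_iff_nil.mpr (isPath_iff_nil.mp hq.of_cons)
      simp
    · have hc : c ∉ s(a, b) := by simp [Sym2.mem_iff, Ne.symm hyx, Ne.symm hbc]
      simp [ih hq.of_cons hbc, hc]

theorem IsCycle.countP_mem_edges_start_eq_two {x : V} {c : G.Walk x x} (hc : c.IsCycle) :
    c.edges.countP (x ∈ ·) = 2 := by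
  cases c with
  | nil => exact (not_isCycle_nil hc).elim
  | cons h q =>
    rw [cons_isCycle_iff] at hc
    simp [hc.1.countP_mem_edges_eq_one h.ne']

theorem IsCycle.countP_mem_edges_eq_two {u x : V} {c : G.Walk u u} (hc : c.IsCycle)
    (hx : x ∈ c.support) : c.edges.countP (x ∈ ·) = 2 := by
  rw [← (c.rotate_edges x hx).perm.countP_eq]
  exact (hc.rotate hx).countP_mem_edges_start_eq_two

variable {u : V} {c : G.Walk u u}

theorem IsHamiltonianCycle.card_filter_mem_edges_eq_two (hc : c.IsHamiltonianCycle) (x : V) :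
    #{e ∈ c.edges.toFinset | x ∈ e} = 2 := by
  rw [hc.isCycle.isTrail.edges_nodup.card_filter_toFinset]
  exact hc.isCycle.countP_mem_edges_eq_two (hc.mem_support x)

theorem IsHamiltonianCycle.card_lt_of_forall_mem_subset (hc : c.IsHamiltonianCycle)
    {F : Finset (Sym2 V)} {S : Finset V} (hF : F ⊆ c.edges.toFinset)
    (hFS : ∀ e ∈ F, ∀ v ∈ e, v ∈ S) {a b : V} (ha : a ∈ S) (hb : b ∉ S) :
    #F < #S := by
  set E := c.edges.toFinset
  obtain ⟨x, y, hxy, hx, hy⟩ :=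
    c.exists_mem_edges_boundary S (hc.mem_support a) (hc.mem_support b) ha hb
  have h2F : 2 * #F = ∑ v ∈ S, #{e ∈ F | v ∈ e} :=
    two_mul_card_eq_sum_card_filter_mem
      (fun e he => G.not_isDiag_of_mem_edgeSet <|
        c.edges_subset_edgeSet (List.mem_toFinset.1 (hF he))) hFS
  -- the boundary edge `s(x, y)` is counted at `x` in `E` but not in `F`
  have hlt : ∑ v ∈ S, #{e ∈ F | v ∈ e} < ∑ v ∈ S, #{e ∈ E | v ∈ e} := by
    refine sum_lt_sum (fun v _ => card_le_card (filter_subset_filter _ hF))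
      ⟨x, hx, card_lt_card ((ssubset_iff_of_subset (filter_subset_filter _ hF)).2
        ⟨s(x, y), ?_, fun h => hy (hFS _ (mem_filter.1 h).1 y (Sym2.mem_mk_right x y))⟩)⟩
    simpa [E] using hxy
  rw [sum_congr rfl fun v _ => hc.card_filter_mem_edges_eq_two v, sum_const, smul_eq_mul] at hlt
  omega

end SimpleGraph.Walk

section BalancedSizes

variable {ι : Type*} [Fintype ι] {a : ι → ℕ} {i j : ι}

theorem add_add_card_sub_two_mul_le_sum {q : ℕ} (hq : ∀ l, q ≤ a l) (hij : i ≠ j) :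
    a i + a j + (Fintype.card ι - 2) * q ≤ ∑ l, a l := by
  have hcard : 1 < Fintype.card ι := Fintype.one_lt_card_iff.2 ⟨i, j, hij⟩
  have hsplit : ∑ l, a l = Fintype.card ι * q + ∑ l, (a l - q) := by
    rw [← smul_eq_mul, ← card_univ, ← sum_const, ← sum_add_distrib]
    exact sum_congr rfl fun l _ => (Nat.add_sub_cancel' (hq l)).symm
  have hij' := add_le_sum (f := fun l => a l - q) (fun _ _ => Nat.zero_le _) (mem_univ i)
    (mem_univ j) hij
  have hmul : Fintype.card ι * q = (Fintype.card ι - 2) * q + 2 * q := by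
    rw [← Nat.add_mul, Nat.sub_add_cancel hcard]
  have := hq i
  have := hq j
  omega

variable {r n : ℕ}

theorem le_sub_one_add_div_of_balanced (hι : Fintype.card ι = r + 1) (hsum : ∑ l, a l = n)
    (ha : ∀ l, a l = n / (r + 1) ∨ a l = (n + r) / (r + 1)) (hij : i ≠ j)
    (hj : a j = (n + r) / (r + 1)) : a i ≤ (n - 1 + r) / (r + 1) := by
  set q := n / (r + 1)
  have hr : 1 ≤ r := by
    have := Fintype.one_lt_card_iff.2 ⟨i, j, hij⟩
    omega
  have hceil : (n + r) / (r + 1) ≤ q + 1 := by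
    rw [← Nat.add_div_right _ (by omega : 0 < r + 1)]
    exact Nat.div_le_div_right (by omega)
  have hq : q ≤ (n - 1 + r) / (r + 1) := Nat.div_le_div_right (by omega)
  have hqle : q ≤ (n + r) / (r + 1) := Nat.div_le_div_right (by omega)
  rcases ha i with hi | hi
  · exact hi ▸ hq
  by_cases hceq : (n + r) / (r + 1) ≤ q
  · omega
  -- two parts of size `q + 1` and `r - 1` parts of size at least `q` force `n ≥ (r + 1) q + 2`
  have hn := add_add_card_sub_two_mul_le_sum (a := a) (q := q)
    (fun l => by rcases ha l with h | h <;> omega) hij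
  have hc : (n + r) / (r + 1) = q + 1 := by omega
  rw [hsum, hι, hi, hj, hc] at hn
  rw [hi, hc, Nat.le_div_iff_mul_le (by omega : 0 < r + 1)]
  have h1 : (r + 1 - 2) * q + 2 * q = (r + 1) * q := by rw [← Nat.add_mul]; congr 1; omega
  have h2 : (q + 1) * (r + 1) = (r + 1) * q + r + 1 := by ring
  omega

theorem add_lt_of_balanced (hι : Fintype.card ι = r + 1) (hr : 2 ≤ r) (hsum : ∑ l, a l = n)
    (ha : ∀ l, a l = n / (r + 1) ∨ a l = (n + r) / (r + 1)) (hn : 3 ≤ n) (hij : i ≠ j) :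
    a i + a j < n := by
  by_cases hnr : r + 1 ≤ n
  · have hq : 1 ≤ n / (r + 1) := (Nat.one_le_div_iff (by omega : 0 < r + 1)).2 hnr
    have hqle : n / (r + 1) ≤ (n + r) / (r + 1) := Nat.div_le_div_right (by omega)
    have := add_add_card_sub_two_mul_le_sum (a := a) (q := n / (r + 1))
      (fun l => by rcases ha l with h | h <;> omega) hij
    rw [hsum, hι] at this
    have : 1 ≤ (r + 1 - 2) * (n / (r + 1)) := Nat.mul_le_mul (by omega : 1 ≤ r + 1 - 2) hq
    omega
  · have hceil : (n + r) / (r + 1) ≤ 1 := Nat.lt_succ_iff.1 <|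
      (Nat.div_lt_iff_lt_mul (by omega : 0 < r + 1)).2 (by omega)
    have hq : n / (r + 1) = 0 := Nat.div_eq_of_lt (by omega)
    rcases ha i with h | h <;> rcases ha j with h' | h' <;> omega

end BalancedSizes

section Partition

variable {V : Type*} [Fintype V] {r : ℕ}

structure IsBalancedPartition (p : V → Fin (r + 1)) : Prop where
  card_part : ∀ i, #{v | p v = i} = Fintype.card V / (r + 1) ∨
    #{v | p v = i} = (Fintype.card V + r) / (r + 1)
  card_last : #{v | p v = Fin.last r} = (Fintype.card V + r) / (r + 1)

theorem card_sub_one_le_le_add (p : V → Fin (r + 1)) :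
    #{v | r - 1 ≤ (p v : ℕ)} ≤
      #{v | p v = ⟨r - 1, by omega⟩} + #{v | p v = Fin.last r} := by
  classical
  refine (card_le_card fun v hv => ?_).trans (card_union_le _ _)
  simp only [mem_filter, mem_univ, true_and, mem_union, Fin.ext_iff, Fin.val_last] at hv ⊢
  omega

namespace IsBalancedPartition

variable {p : V → Fin (r + 1)}

theorem card_part_le (hp : IsBalancedPartition p) {i : Fin (r + 1)} (hi : i ≠ Fin.last r) :
    #{v | p v = i} ≤ (Fintype.card V - 1 + r) / (r + 1) :=
  le_sub_one_add_div_of_balanced (a := fun i => #{v | p v = i}) (Fintype.card_fin _)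
    (card_eq_sum_card_fiberwise fun v _ => mem_univ (p v)).symm hp.card_part hi hp.card_last

theorem card_sub_one_le_le (hp : IsBalancedPartition p) (hr : 0 < r) :
    #{v | r - 1 ≤ (p v : ℕ)} ≤ 2 * ((Fintype.card V - 1 + r) / (r + 1)) + 1 := by
  have hlast : (Fintype.card V + r) / (r + 1) ≤ (Fintype.card V - 1 + r) / (r + 1) + 1 := by
    rw [← Nat.add_div_right _ (by omega : 0 < r + 1)]
    exact Nat.div_le_div_right (by omega)
  have := hp.card_part_le (i := ⟨r - 1, by omega⟩) (by simp [Fin.ext_iff]; omega)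
  have := card_sub_one_le_le_add p
  have := hp.card_last
  omega

theorem card_sub_one_le_lt (hp : IsBalancedPartition p) (hr : 2 ≤ r) (hn : 3 ≤ Fintype.card V) :
    #{v | r - 1 ≤ (p v : ℕ)} < Fintype.card V :=
  (card_sub_one_le_le_add p).trans_lt <|
    add_lt_of_balanced (a := fun i => #{v | p v = i}) (Fintype.card_fin _) hr
      (card_eq_sum_card_fiberwise fun v _ => mem_univ (p v)).symm hp.card_part hn
      (by simp [Fin.ext_iff]; omega)

end IsBalancedPartition

end Partition

section Colouring

variable {V : Type*} {r : ℕ} {p : V → Fin (r + 1)} {col : Sym2 V → Fin r}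

def IsMinPartColouring (p : V → Fin (r + 1)) (col : Sym2 V → Fin r) : Prop :=
  ∀ u v : V, u ≠ v → (col s(u, v) : ℕ) = min (min (p u : ℕ) (p v : ℕ)) (r - 1)

theorem exists_mem_eq_castSucc_of_col_eq (hcol : IsMinPartColouring p col) {e : Sym2 V}
    (he : ¬e.IsDiag) {k : Fin r} (hek : col e = k) (hk : (k : ℕ) < r - 1) :
    ∃ v ∈ e, p v = k.castSucc := by
  induction e using Sym2.ind with
  | _ u v =>
    have h := hcol u v (by simpa using he)
    rw [hek] at h
    rcases Nat.lt_or_ge (p u) (p v) with huv | huv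
    · exact ⟨u, Sym2.mem_mk_left u v, Fin.ext (by simp; omega)⟩
    · exact ⟨v, Sym2.mem_mk_right u v, Fin.ext (by simp; omega)⟩

theorem sub_one_le_of_col_eq (hcol : IsMinPartColouring p col) {e : Sym2 V} (he : ¬e.IsDiag)
    (hek : (col e : ℕ) = r - 1) : ∀ v ∈ e, r - 1 ≤ (p v : ℕ) := by
  induction e using Sym2.ind with
  | _ u v =>
    have h := hcol u v (by simpa using he)
    intro w hw
    rcases Sym2.mem_iff.1 hw with rfl | rfl <;> omega

variable [Fintype V] [DecidableEq V]

theorem card_filter_col_eq_le_of_lt (hcol : IsMinPartColouring p col) {F : Finset (Sym2 V)}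
    {d : ℕ} (hF : ∀ e ∈ F, ¬e.IsDiag) (hdeg : ∀ v, #{e ∈ F | v ∈ e} ≤ d) {k : Fin r}
    (hk : (k : ℕ) < r - 1) : #{e ∈ F | col e = k} ≤ d * #{v | p v = k.castSucc} :=
  card_le_mul_card_of_forall_exists_mem
    (fun e he => by
      obtain ⟨v, hv, hpv⟩ :=
        exists_mem_eq_castSucc_of_col_eq hcol (hF e (mem_filter.1 he).1) (mem_filter.1 he).2 hk
      exact ⟨v, by simpa using hpv, hv⟩)
    (fun v _ => (card_le_card (filter_subset_filter _ (filter_subset _ _))).trans (hdeg v))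

theorem length_filter_col_eq_le_of_isHamiltonianCycle (hp : IsBalancedPartition p) (hr : 2 ≤ r)
    (hcol : IsMinPartColouring p col) {u : V} {c : (⊤ : SimpleGraph V).Walk u u}
    (hc : c.IsHamiltonianCycle) (k : Fin r) :
    (c.edges.filter fun e => decide (col e = k)).length ≤
      2 * ((Fintype.card V - 1 + r) / (r + 1)) := by
  have hE : ∀ e ∈ c.edges.toFinset, ¬e.IsDiag := fun e he =>
    not_isDiag_of_mem_edgeSet _ (c.edges_subset_edgeSet (List.mem_toFinset.1 he))
  rw [← List.countP_eq_length_filter, ← hc.isCycle.isTrail.edges_nodup.card_filter_toFinset]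
  rcases Nat.lt_or_ge k (r - 1) with hk | hk
  · calc #{e ∈ c.edges.toFinset | col e = k}
        ≤ 2 * #{v | p v = k.castSucc} :=
          card_filter_col_eq_le_of_lt hcol hE (fun v => (hc.card_filter_mem_edges_eq_two v).le) hk
      _ ≤ _ := Nat.mul_le_mul_left 2 (hp.card_part_le (Fin.castSucc_lt_last k).ne)
  set F := {e ∈ c.edges.toFinset | col e = k}
  have hFS : ∀ e ∈ F, ∀ v ∈ e, v ∈ ({v | r - 1 ≤ (p v : ℕ)} : Finset V) :=
    fun e he v hv => by
      simpa using sub_one_le_of_col_eq hcol (hE e (mem_filter.1 he).1)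
        (by rw [(mem_filter.1 he).2]; omega) v hv
  obtain hF | ⟨e, he⟩ := F.eq_empty_or_nonempty
  · simp [hF]
  have hn : 3 ≤ Fintype.card V := hc.length_eq ▸ hc.isCycle.three_le_length
  obtain ⟨b, -, hb⟩ := exists_mem_notMem_of_card_lt_card (hp.card_sub_one_le_lt hr hn)
  exact Nat.le_of_lt_succ <| (hc.card_lt_of_forall_mem_subset (filter_subset _ _) hFS
    (hFS e he _ (Sym2.out_fst_mem e)) hb).trans_le (hp.card_sub_one_le_le (by omega))

theorem card_le_of_pairwise_disjoint (hp : IsBalancedPartition p) (hr : 0 < r)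
    (hcol : IsMinPartColouring p col) {M : Finset (Sym2 V)}
    (hM : ↑M ⊆ (⊤ : SimpleGraph V).edgeSet)
    (hdisj : (M : Set (Sym2 V)).Pairwise (fun e f => ∀ x : V, ¬(x ∈ e ∧ x ∈ f)))
    {k : Fin r} (hMk : ∀ e ∈ M, col e = k) :
    #M ≤ (Fintype.card V - 1 + r) / (r + 1) := by
  have hM' : ∀ e ∈ M, ¬e.IsDiag := fun e he => not_isDiag_of_mem_edgeSet _ (hM he)
  have hdeg : ∀ v, #{e ∈ M | v ∈ e} ≤ 1 := fun v => card_le_one.2 fun e he f hf => by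
    by_contra hef
    exact hdisj (mem_filter.1 he).1 (mem_filter.1 hf).1 hef v
      ⟨(mem_filter.1 he).2, (mem_filter.1 hf).2⟩
  rcases Nat.lt_or_ge k (r - 1) with hk | hk
  · calc #M = #{e ∈ M | col e = k} := by rw [filter_true_of_mem hMk]
      _ ≤ 1 * #{v | p v = k.castSucc} := card_filter_col_eq_le_of_lt hcol hM' hdeg hk
      _ ≤ _ := by rw [one_mul]; exact hp.card_part_le (Fin.castSucc_lt_last k).ne
  have h2M : 2 * #M ≤ 2 * ((Fintype.card V - 1 + r) / (r + 1)) + 1 :=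
    calc 2 * #M = ∑ v ∈ ({v | r - 1 ≤ (p v : ℕ)} : Finset V), #{e ∈ M | v ∈ e} :=
          two_mul_card_eq_sum_card_filter_mem hM' fun e he v hv => by
            simpa using sub_one_le_of_col_eq hcol (hM' e he) (by rw [hMk e he]; omega) v hv
      _ ≤ #{v | r - 1 ≤ (p v : ℕ)} := by
          simpa using sum_le_sum fun v (_ : v ∈ ({v | r - 1 ≤ (p v : ℕ)} : Finset V)) =>
            hdeg v
      _ ≤ _ := hp.card_sub_one_le_le hr
  omega

end Colouring

/-- Construction 2.3.  Partition the complete graph `K_n` into parts indexed by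
`Fin (r+1)`, each of size `⌊n/(r+1)⌋` or `⌈n/(r+1)⌉` with the last part of size
`⌈n/(r+1)⌉`.  Colour an edge by `min{min(part indices), r−1}` (so edges inside or
meeting part `i < r` get colour `i`, and edges inside the last part get the last
colour).  Then every Hamilton cycle of `K_n` has at most `2⌈(n−1)/(r+1)⌉`
edges of one colour, and every monochromatic matching has size at most
`⌈(n−1)/(r+1)⌉`. -/
theorem stmt_12 {V : Type*} [Fintype V] [DecidableEq V]
    (r : ℕ) (hr : 2 ≤ r)
    (p : V → Fin (r + 1))
    (hsizes : ∀ i : Fin (r + 1),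
      {v | p v = i}.ncard = Fintype.card V / (r + 1) ∨
      {v | p v = i}.ncard = (Fintype.card V + r) / (r + 1))
    (hlast : {v | p v = Fin.last r}.ncard = (Fintype.card V + r) / (r + 1))
    (col : Sym2 V → Fin r)
    (hcol : ∀ u v : V, u ≠ v →
      (col s(u, v) : ℕ) = min (min (p u : ℕ) (p v : ℕ)) (r - 1)) :
    (∀ (v : V) (c : (⊤ : SimpleGraph V).Walk v v), c.IsHamiltonianCycle →
      ∀ k : Fin r, (c.edges.filter fun e => decide (col e = k)).length ≤
        2 * ((Fintype.card V - 1 + r) / (r + 1))) ∧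
    ∀ M : Finset (Sym2 V), ↑M ⊆ (⊤ : SimpleGraph V).edgeSet →
      (M : Set (Sym2 V)).Pairwise (fun e f => ∀ x : V, ¬(x ∈ e ∧ x ∈ f)) →
      (∃ k : Fin r, ∀ e ∈ M, col e = k) →
      M.card ≤ (Fintype.card V - 1 + r) / (r + 1) := by
  have hncard (i : Fin (r + 1)) : {v | p v = i}.ncard = #{v | p v = i} := by
    rw [Set.ncard_eq_toFinset_card', Set.toFinset_ofPred]
  have hp : IsBalancedPartition p := ⟨fun i => hncard i ▸ hsizes i, hncard _ ▸ hlast⟩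
  exact ⟨fun _ _ hc k => length_filter_col_eq_le_of_isHamiltonianCycle hp hr hcol hc k,
    fun _ hM hdisj ⟨_, hk⟩ => card_le_of_pairwise_disjoint hp (by omega) hcol hM hdisj hk⟩
end

section
/- For every d with 0 ≤ d ≤ n−1 there exists an n-vertex graph with minimum degree at least d together with an r-edge-colouring such that the maximum size of a monochromatic matching is at most ⌈min{d/r, (n−1)/(r+1)}⌉. -/
/-!
Put `m = ⌈min (d / r, (n - 1) / (r + 1))⌉`, cut the vertices `0, …, n - 1` into consecutive
blocks of `m` vertices, the `r`-th block absorbing everything from `(r - 1) m` on, and colour an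
edge by the block of its lower endpoint. Every edge of a colour whose block has at most `m` vertices meets
that block, so a monochromatic matching in such a colour has at most `m` edges.

If `n ≤ (r + 1) m + 1`, take the complete graph: the last block has at most `2 m + 1` vertices and
contains both ends of every edge of the last colour, so again a matching has at most `m` edges.
Otherwise `d ≤ r m`, and we keep only the edges with an endpoint among the first `r m` vertices:
all `r` colour classes then have their lower endpoints in blocks of size `m`, while every vertex
still has degree at least `min (n - 1, r m) ≥ d`.
-/

open SimpleGraph Finset

def VertexDisjoint {α : Type*} (M : Set (Sym2 α)) : Prop :=
  M.Pairwise fun e f => ∀ x, ¬(x ∈ e ∧ x ∈ f)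

namespace VertexDisjoint

variable {α : Type*} [DecidableEq α] {M : Finset (Sym2 α)} {T : Finset α}

theorem card_mul_le (hM : VertexDisjoint (M : Set (Sym2 α))) {j : ℕ}
    (hT : ∀ e ∈ M, j ≤ #{x ∈ T | x ∈ e}) : #M * j ≤ #T := by
  rw [← mul_one #T]
  refine card_mul_le_card_mul (fun e x => x ∈ e) hT fun x _ => card_le_one.2 ?_
  simp only [mem_bipartiteBelow]
  intro e ⟨he, hxe⟩ f ⟨hf, hxf⟩
  by_contra hef
  exact hM he hf hef x ⟨hxe, hxf⟩

theorem card_le_of_forall_exists_mem (hM : VertexDisjoint (M : Set (Sym2 α)))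
    (hT : ∀ e ∈ M, ∃ x ∈ T, x ∈ e) : #M ≤ #T := by
  simpa using hM.card_mul_le (j := 1) fun e he => card_pos.2 <| by
    obtain ⟨x, hxT, hxe⟩ := hT e he
    exact ⟨x, mem_filter.2 ⟨hxT, hxe⟩⟩

theorem two_mul_card_le (hM : VertexDisjoint (M : Set (Sym2 α)))
    (hdiag : ∀ e ∈ M, ¬e.IsDiag) (hT : ∀ e ∈ M, ∀ x ∈ e, x ∈ T) : 2 * #M ≤ #T := by
  rw [mul_comm]
  refine hM.card_mul_le fun e he => ?_
  induction e with | _ a b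
  have hab : a ≠ b := by simpa using hdiag _ he
  calc 2 = #{a, b} := (card_pair hab).symm
    _ ≤ _ := card_le_card fun x hx => by
      have hxe : x ∈ s(a, b) := by simpa using hx
      exact mem_filter.2 ⟨hT _ he x hxe, hxe⟩

end VertexDisjoint

theorem Sym2.inf_le_of_mem {α : Type*} [LinearOrder α] {e : Sym2 α} {x : α} (hx : x ∈ e) :
    e.inf ≤ x := by
  induction e with | _ a b
  rcases Sym2.mem_iff.1 hx with rfl | rfl <;> simp

theorem Sym2.inf_mem {α : Type*} [LinearOrder α] (e : Sym2 α) : e.inf ∈ e := by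
  induction e with | _ a b
  rcases le_total a b with h | h <;> simp [h]

theorem Fin.card_le_of_forall_val_mem_Ico {n a b : ℕ} (T : Finset (Fin n))
    (hT : ∀ v ∈ T, v.val ∈ Set.Ico a b) : #T ≤ b - a := by
  simpa using card_le_card_of_injOn Fin.val (t := Finset.Ico a b)
    (fun v hv => by simpa using hT v hv) Fin.val_injective.injOn

theorem SimpleGraph.card_le_ncard_neighborSet {V : Type*} [Finite V] {G : SimpleGraph V} {v : V}
    (s : Finset V) (hs : ∀ w ∈ s, G.Adj v w) : #s ≤ (G.neighborSet v).ncard := by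
  rw [← Set.ncard_coe_finset]
  exact Set.ncard_le_ncard hs

section Construction

variable {n r : ℕ} (hr : 0 < r) (m : ℕ)

def blockColour (v : Fin n) : Fin r := ⟨min (v.val / m) (r - 1), by omega⟩

def edgeColour (e : Sym2 (Fin n)) : Fin r := blockColour hr m e.inf

variable {hr m}

theorem val_mem_Ico_of_blockColour {v : Fin n} (hm : 0 < m)
    (hv : v.val < r * m ∨ (blockColour hr m v).val < r - 1) :
    v.val ∈ Set.Ico ((blockColour hr m v).val * m) ((blockColour hr m v).val * m + m) := by
  have hdiv : (blockColour hr m v).val = v.val / m := by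
    simp only [blockColour] at hv ⊢
    rcases hv with hv | hv
    · have := (Nat.div_lt_iff_lt_mul hm).2 hv
      omega
    · omega
  rw [hdiv]
  exact ⟨Nat.div_mul_le_self _ _, Nat.lt_div_mul_add hm⟩

theorem mul_le_of_blockColour_eq {v : Fin n} (hm : 0 < m)
    (hv : (blockColour hr m v).val = r - 1) : (r - 1) * m ≤ v.val := by
  have : r - 1 ≤ v.val / m := by
    simp only [blockColour] at hv
    omega
  exact (Nat.le_div_iff_mul_le hm).1 this

/-- `fromRel` symmetrises the relation: the edges are those with an endpoint below `L`. -/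
def lowGraph (n L : ℕ) : SimpleGraph (Fin n) := SimpleGraph.fromRel fun a _ => a.val < L

theorem inf_lt_of_mem_edgeSet_lowGraph {L : ℕ} {e : Sym2 (Fin n)}
    (he : e ∈ (lowGraph n L).edgeSet) : e.inf.val < L := by
  induction e with | _ a b
  simp only [lowGraph, mem_edgeSet, fromRel_adj, Sym2.inf_mk, Fin.coe_min] at he ⊢
  omega

theorem min_le_ncard_neighborSet_lowGraph (L : ℕ) (v : Fin n) :
    min (n - 1) L ≤ ((lowGraph n L).neighborSet v).ncard := by
  by_cases hv : v.val < L
  · refine (min_le_left _ _).trans ?_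
    have := card_le_ncard_neighborSet (G := lowGraph n L) (univ.erase v) fun w hw => by
      simp only [lowGraph, fromRel_adj]
      exact ⟨(ne_of_mem_erase hw).symm, Or.inl hv⟩
    simpa using this
  · have := card_le_ncard_neighborSet (G := lowGraph n L) {w : Fin n | w.val < L} fun w hw => by
      simp only [mem_filter, mem_univ, true_and] at hw
      simp only [lowGraph, fromRel_adj]
      exact ⟨by rintro rfl; exact hv hw, Or.inr hw⟩
    rw [Fin.card_filter_val_lt] at this
    omega

variable {M : Finset (Sym2 (Fin n))} {k : Fin r}

theorem card_le_of_inf_mem_block (hm : 0 < m)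
    (hM : VertexDisjoint (M : Set (Sym2 (Fin n)))) (hk : ∀ e ∈ M, edgeColour hr m e = k)
    (hinf : ∀ e ∈ M, e.inf.val < r * m ∨ k.val < r - 1) : #M ≤ m := by
  have hblock : ∀ e ∈ M, e.inf.val ∈ Set.Ico (k.val * m) (k.val * m + m) := fun e he => by
    rw [← hk e he]
    exact val_mem_Ico_of_blockColour hm (by rw [← hk e he] at hinf; exact hinf e he)
  calc #M ≤ #{v : Fin n | v.val ∈ Set.Ico (k.val * m) (k.val * m + m)} :=
        hM.card_le_of_forall_exists_mem fun e he =>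
          ⟨e.inf, mem_filter.2 ⟨mem_univ _, hblock e he⟩, Sym2.inf_mem e⟩
    _ ≤ k.val * m + m - k.val * m :=
        Fin.card_le_of_forall_val_mem_Ico _ fun v hv => (mem_filter.1 hv).2
    _ = m := by omega

theorem card_le_of_forall_inf_lt (hM : VertexDisjoint (M : Set (Sym2 (Fin n))))
    (hk : ∀ e ∈ M, edgeColour hr m e = k) (hinf : ∀ e ∈ M, e.inf.val < r * m) :
    #M ≤ m := by
  obtain rfl | ⟨e₀, he₀⟩ := M.eq_empty_or_nonempty
  · simp
  have hm : 0 < m := Nat.pos_of_mul_pos_left (Nat.zero_lt_of_lt (hinf e₀ he₀))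
  exact card_le_of_inf_mem_block hm hM hk fun e he => Or.inl (hinf e he)

theorem card_le_of_le_mul (hn : n ≤ (r + 1) * m + 1)
    (hM : VertexDisjoint (M : Set (Sym2 (Fin n))))
    (hdiag : ∀ e ∈ M, ¬e.IsDiag) (hk : ∀ e ∈ M, edgeColour hr m e = k) : #M ≤ m := by
  obtain rfl | ⟨e₀, he₀⟩ := M.eq_empty_or_nonempty
  · simp
  have hm : 0 < m := by
    induction e₀ with | _ a b
    have hab : a ≠ b := by simpa using hdiag _ he₀
    have : 1 < n := by omega
    exact Nat.pos_of_ne_zero fun h => by simp [h] at hn; omega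
  rcases (show k.val < r - 1 ∨ k.val = r - 1 by omega) with hk' | hk'
  · exact card_le_of_inf_mem_block hm hM hk fun _ _ => Or.inr hk'
  have hdouble := hM.two_mul_card_le (T := {v : Fin n | v.val ∈ Set.Ico ((r - 1) * m) n}) hdiag
    fun e he x hx => by
      have hinf := mul_le_of_blockColour_eq hm (v := e.inf) (by rw [← hk', ← hk e he]; rfl)
      exact mem_filter.2 ⟨mem_univ _, hinf.trans (Sym2.inf_le_of_mem hx), x.isLt⟩
  have hwindow := Fin.card_le_of_forall_val_mem_Ico
    {v : Fin n | v.val ∈ Set.Ico ((r - 1) * m) n} fun v hv => (mem_filter.1 hv).2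
  have : (r + 1) * m = (r - 1) * m + 2 * m := by rw [← add_mul]; congr 1; omega
  omega

end Construction

theorem exists_graph_colouring_monochromatic_matching_card_le {n r d m : ℕ} (hr : 0 < r)
    (hd : d ≤ n - 1) (hm : n ≤ (r + 1) * m + 1 ∨ d ≤ r * m) :
    ∃ (G : SimpleGraph (Fin n)) (col : Sym2 (Fin n) → Fin r),
      (∀ v, d ≤ (G.neighborSet v).ncard) ∧
      ∀ M : Finset (Sym2 (Fin n)), ↑M ⊆ G.edgeSet → VertexDisjoint (M : Set (Sym2 (Fin n))) →
        (∃ k : Fin r, ∀ e ∈ M, col e = k) → #M ≤ m := by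
  rcases hm with hn | hdm
  · refine ⟨lowGraph n n, edgeColour hr m, fun v => ?_, fun M hMG hM ⟨k, hk⟩ => ?_⟩
    · exact (le_min hd (by omega)).trans (min_le_ncard_neighborSet_lowGraph n v)
    · exact card_le_of_le_mul hn hM (fun e he => not_isDiag_of_mem_edgeSet _ (hMG he)) hk
  · refine ⟨lowGraph n (r * m), edgeColour hr m, fun v => ?_, fun M hMG hM ⟨k, hk⟩ => ?_⟩
    · exact (le_min hd hdm).trans (min_le_ncard_neighborSet_lowGraph _ v)
    · exact card_le_of_forall_inf_lt hM hk fun e he => inf_lt_of_mem_edgeSet_lowGraph (hMG he)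

theorem le_mul_add_one_or_le_mul_of_min_div_le {n r d m : ℕ} (hr : 0 < r)
    (h : min ((d : ℚ) / r) (((n : ℚ) - 1) / (r + 1)) ≤ m) :
    n ≤ (r + 1) * m + 1 ∨ d ≤ r * m := by
  rcases min_le_iff.1 h with h | h
  · rw [div_le_iff₀ (by exact_mod_cast hr)] at h
    right
    exact_mod_cast h.trans_eq (mul_comm _ _)
  · rw [div_le_iff₀ (by positivity)] at h
    left
    exact_mod_cast (show (n : ℚ) ≤ (r + 1) * m + 1 by linarith)

/-- For all `0 ≤ d ≤ n−1` there exists an `n`-vertex graph with minimum degree at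
least `d`, together with an `r`-edge-colouring, such that every monochromatic
matching has size at most `⌈min{d/r, (n−1)/(r+1)}⌉`. -/
theorem stmt_13 (n r d : ℕ) (hr : 2 ≤ r) (hd : d ≤ n - 1) :
    ∃ (G : SimpleGraph (Fin n)) (col : Sym2 (Fin n) → Fin r),
      (∀ v, d ≤ (G.neighborSet v).ncard) ∧
      ∀ M : Finset (Sym2 (Fin n)), ↑M ⊆ G.edgeSet →
        (M : Set (Sym2 (Fin n))).Pairwise (fun e f => ∀ x : Fin n, ¬(x ∈ e ∧ x ∈ f)) →
        (∃ k : Fin r, ∀ e ∈ M, col e = k) →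
        (M.card : ℤ) ≤ ⌈min ((d : ℚ) / r) (((n : ℚ) - 1) / (r + 1))⌉ := by
  set q : ℚ := min ((d : ℚ) / r) (((n : ℚ) - 1) / (r + 1))
  -- `q < 0` when `n = 0`; `-1 < q` still makes `⌈q⌉.toNat` equal to `⌈q⌉`.
  have hq : -1 < q := lt_min (neg_one_lt_zero.trans_le (by positivity)) <| by
    rw [lt_div_iff₀ (by positivity)]
    have : (2 : ℚ) ≤ r := by exact_mod_cast hr
    linarith [(Nat.cast_nonneg n : (0 : ℚ) ≤ n)]
  have hceil : 0 ≤ ⌈q⌉ := Int.lt_ceil.2 (by exact_mod_cast hq)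
  have hqm : q ≤ (⌈q⌉.toNat : ℚ) := by
    exact_mod_cast (Int.le_ceil q).trans (by exact_mod_cast Int.self_le_toNat _)
  obtain ⟨G, col, hdeg, hcard⟩ := exists_graph_colouring_monochromatic_matching_card_le
    (by omega) hd (le_mul_add_one_or_le_mul_of_min_div_le (by omega) hqm)
  refine ⟨G, col, hdeg, fun M hMG hM hk => ?_⟩
  calc (#M : ℤ) ≤ ⌈q⌉.toNat := by exact_mod_cast hcard M hMG hM hk
    _ = ⌈q⌉ := Int.toNat_of_nonneg hceil
end

section
/- Let H be a graph and M a matching on V(H) such that H is an M-respecting 2-expander. Let P be a longest M-respecting path in H + M with endpoint v. Then there are at least |V(H)|/8 vertices u ∈ V(P) for which there is an M-respecting path in H + M from v to u whose vertex set equals V(P). -/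
open SimpleGraph

/-- A walk `p` (in any graph) is `M`-respecting if every edge of the matching
graph `M` either belongs to the walk's edges or is vertex-disjoint from the walk. -/
def MRespecting {V : Type*} (M : SimpleGraph V) {G : SimpleGraph V} {u v : V}
    (p : G.Walk u v) : Prop :=
  ∀ e ∈ M.edgeSet, e ∈ p.edges ∨ ∀ x, x ∈ e → x ∉ p.support

/-- `H` is an `M`-respecting 2-expander: `H` is connected and every `U ⊆ V` with
`|U| ≤ |V|/8` satisfies `|N_H(U) \ V(M)| ≥ 2|U|`. -/
def MRespExpander {V : Type*} [Fintype V] (H M : SimpleGraph V) : Prop :=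
  H.Connected ∧ ∀ U : Set V, 8 * U.ncard ≤ Fintype.card V →
    2 * U.ncard ≤ (((⋃ u ∈ U, H.neighborSet u) \ U) \ M.support).ncard

/-! Pósa rotations. Let `R` be the set of endpoints of the paths obtained from `P` by
`M`-respecting rotations fixing `v`. Each such path is again a longest `M`-respecting path on
`V(P)`, so it suffices to show `|R| ≥ |V|/8`. Otherwise expansion yields at least `2|R|`
vertices `y ∉ R ∪ V(M)` with an `H`-neighbour in `R`. By maximality each such `y` lies on `P`,
and rotating at `y` (allowed since `y ∉ V(M)`) shows that `y` is a `P`-neighbour of a vertex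
of `R`: otherwise the rotated path would have more edges at `y` than `P` has. But along `P`
the set `R` has at most `2|R| - 1` neighbours, since its member `w` is an endpoint of `P`. -/

lemma MRespecting.concat {V : Type*} {G M : SimpleGraph V} {u x y : V} {r : G.Walk u x}
    (hr : MRespecting M r) (h : G.Adj x y) (hy : y ∉ M.support) : MRespecting M (r.concat h) := by
  intro e he
  rcases hr e he with her | hdisj
  · exact Or.inl (by simp [Walk.edges_concat, her])
  · refine Or.inr fun x hx hxs => ?_
    rcases (by simpa [Walk.support_concat] using hxs : x ∈ r.support ∨ x = y) with hxs | rfl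
    · exact hdisj x hx hxs
    · rw [← Sym2.other_spec hx] at he
      exact hy ⟨_, he⟩

namespace SimpleGraph.Walk

variable {V : Type*} {G M : SimpleGraph V}

lemma IsPath.neighborSet_toSubgraph_getVert_subset {u v : V} {p : G.Walk u v} (hp : p.IsPath)
    {i : ℕ} (hi : i ≤ p.length) :
    p.toSubgraph.neighborSet (p.getVert i) ⊆ {p.getVert (i - 1), p.getVert (i + 1)} := by
  intro y hy
  obtain ⟨j, hj, hjl⟩ := p.toSubgraph_adj_iff.mp hy
  rcases Sym2.eq_iff.mp hj with ⟨hji, rfl⟩ | ⟨rfl, hji⟩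
  · have : j = i := hp.getVert_injOn (show j ≤ p.length by omega) hi hji
    simp [this]
  · have : j + 1 = i := hp.getVert_injOn (show j + 1 ≤ p.length by omega) hi hji
    simp [← this]

lemma IsPath.ncard_neighborSet_toSubgraph_le_two {u v : V} {p : G.Walk u v} (hp : p.IsPath)
    (x : V) : (p.toSubgraph.neighborSet x).ncard ≤ 2 := by
  by_cases hx : x ∈ p.support
  · obtain ⟨i, rfl, hi⟩ := mem_support_iff_exists_getVert.mp hx
    exact (Set.ncard_le_ncard (hp.neighborSet_toSubgraph_getVert_subset hi)).trans
      ((Set.ncard_insert_le _ _).trans (by rw [Set.ncard_singleton]))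
  · have : p.toSubgraph.neighborSet x = ∅ :=
      Set.eq_empty_of_forall_notMem fun y hy => hx (mem_support_of_adj_toSubgraph hy)
    simp [this]

lemma IsPath.ncard_neighborSet_toSubgraph_end_le_one {u v : V} {p : G.Walk u v}
    (hp : p.IsPath) : (p.toSubgraph.neighborSet v).ncard ≤ 1 := by
  have hsub := hp.neighborSet_toSubgraph_getVert_subset le_rfl
  rw [getVert_length, p.getVert_of_length_le (Nat.le_succ _)] at hsub
  have hv : v ∉ p.toSubgraph.neighborSet v := fun h => h.ne rfl
  have : p.toSubgraph.neighborSet v ⊆ {p.getVert (p.length - 1)} := fun y hy => by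
    rcases hsub hy with h | h
    · exact h
    · exact absurd (h ▸ hy) hv
  exact (Set.ncard_le_ncard this).trans (Set.ncard_singleton _).le

lemma IsPath.ncard_neighborSet_toSubgraph_le_of_ne {u v v' y : V} {p : G.Walk u v}
    {r : G.Walk u v'} (hp : p.IsPath) (hr : r.IsPath) (hy : y ∈ p.support) (hyv : y ≠ v) :
    (r.toSubgraph.neighborSet y).ncard ≤ (p.toSubgraph.neighborSet y).ncard := by
  obtain ⟨i, rfl, hi⟩ := mem_support_iff_exists_getVert.mp hy
  have hil : i ≠ p.length := fun h => hyv (h ▸ p.getVert_length)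
  rcases Nat.eq_zero_or_pos i with rfl | hi0
  · have hnil : ¬ p.Nil := fun h => hyv (by simp [h.eq])
    rw [getVert_zero, hp.neighborSet_toSubgraph_startpoint hnil, Set.ncard_singleton]
    simpa using hr.reverse.ncard_neighborSet_toSubgraph_end_le_one
  · rw [hp.ncard_neighborSet_toSubgraph_internal_eq_two hi0.ne' (by omega)]
    exact hr.ncard_neighborSet_toSubgraph_le_two _

lemma IsPath.ncard_biUnion_neighborSet_toSubgraph_lt {u v : V} {p : G.Walk u v}
    (hp : p.IsPath) {S : Set V} (hS : S.Finite) (hv : v ∈ S) :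
    (⋃ z ∈ S, p.toSubgraph.neighborSet z).ncard < 2 * S.ncard := by
  classical
  have hvS : v ∈ hS.toFinset := hS.mem_toFinset.mpr hv
  have hunion := hS.toFinset.set_ncard_biUnion_le (fun z => p.toSubgraph.neighborSet z)
  simp only [Set.Finite.mem_toFinset] at hunion
  have hsum : ∑ z ∈ hS.toFinset, (p.toSubgraph.neighborSet z).ncard ≤
      1 + 2 * (hS.toFinset.card - 1) := by
    rw [← Finset.sum_erase_add _ _ hvS, add_comm, ← Finset.card_erase_of_mem hvS, mul_comm]
    exact add_le_add hp.ncard_neighborSet_toSubgraph_end_le_one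
      (Finset.sum_le_card_nsmul _ _ _ fun z _ => hp.ncard_neighborSet_toSubgraph_le_two z)
  have hpos : 0 < hS.toFinset.card := Finset.card_pos.mpr ⟨v, hvS⟩
  rw [Set.ncard_eq_toFinset_card S hS]
  omega

/-- `q` arises from `p` by rotations fixing the start, each turning `q₁ ++ s(y, z) ++ q₂` into
`q₁ ++ s(y, u) ++ q₂.reverse` (`u` the current endpoint). Breaking `s(y, z)` is only allowed
for `y ∉ V(M)`, which keeps `s(y, z) ∉ M`. -/
inductive RotatesTo (M : SimpleGraph V) {v w : V} (p : G.Walk v w) :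
    ∀ {u : V}, G.Walk v u → Prop
  | refl : RotatesTo M p p
  | rotate {y z u : V} (q₁ : G.Walk v y) (hyz : G.Adj y z) (q₂ : G.Walk z u) (hyu : G.Adj y u)
      (hy : y ∉ M.support) : RotatesTo M p (q₁.append (cons hyz q₂)) →
      RotatesTo M p (q₁.append (cons hyu q₂.reverse))

def rotationEndpoints (M : SimpleGraph V) {v w : V} (p : G.Walk v w) : Set V :=
  {u | ∃ q : G.Walk v u, p.RotatesTo M q}

lemma end_mem_rotationEndpoints {v w : V} (p : G.Walk v w) :
    w ∈ p.rotationEndpoints M :=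
  ⟨p, .refl⟩

namespace RotatesTo

variable {v w u : V} {p : G.Walk v w} {q : G.Walk v u}

lemma mem_support_iff (hq : p.RotatesTo M q) {x : V} : x ∈ q.support ↔ x ∈ p.support := by
  induction hq with
  | refl => rfl
  | rotate _ _ _ _ _ _ ih =>
    rw [← ih]
    simp only [mem_support_append_iff, support_cons, List.mem_cons, support_reverse,
      List.mem_reverse]

lemma length_eq (hq : p.RotatesTo M q) : q.length = p.length := by
  induction hq with
  | refl => rfl
  | rotate _ _ _ _ _ _ ih => simpa using ih

lemma isPath (hq : p.RotatesTo M q) (hp : p.IsPath) : q.IsPath := by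
  induction hq with
  | refl => exact hp
  | rotate _ _ _ _ _ _ ih =>
    rw [isPath_def, support_append, support_cons, List.tail_cons, List.nodup_append] at ih ⊢
    rw [support_reverse]
    exact ⟨ih.1, List.nodup_reverse.mpr ih.2.1,
      fun a ha b hb => ih.2.2 a ha b (List.mem_reverse.mp hb)⟩

lemma mRespecting (hq : p.RotatesTo M q) (hp : MRespecting M p) : MRespecting M q := by
  induction hq with
  | refl => exact hp
  | @rotate y z u q₁ hyz q₂ hyu hy hq ih =>
    intro e he
    rcases ih e he with he' | hdisj
    · left
      rw [edges_append, edges_cons, List.mem_append, List.mem_cons] at he'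
      rcases he' with h | rfl | h
      · simp [h]
      · exact absurd ⟨z, he⟩ hy
      · simp [h]
    · exact Or.inr fun x hx hxs =>
        hdisj x hx (hq.mem_support_iff.mpr ((hq.rotate _ _ _ _ hy).mem_support_iff.mp hxs))

lemma mem_edges (hq : p.RotatesTo M q) {a b : V} (hab : s(a, b) ∈ p.edges) :
    s(a, b) ∈ q.edges ∨ a ∈ p.rotationEndpoints M ∨ b ∈ p.rotationEndpoints M := by
  induction hq with
  | refl => exact Or.inl hab
  | @rotate y z u q₁ hyz q₂ hyu hy hq ih =>
    have hz : z ∈ p.rotationEndpoints M := ⟨_, hq.rotate q₁ hyz q₂ hyu hy⟩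
    rcases ih with h | h
    · rw [edges_append, edges_cons, List.mem_append, List.mem_cons] at h
      rcases h with h | h | h
      · simp [h]
      · rcases Sym2.eq_iff.mp h with ⟨-, rfl⟩ | ⟨rfl, -⟩
        · exact Or.inr (Or.inr hz)
        · exact Or.inr (Or.inl hz)
      · simp [h]
    · exact Or.inr h

lemma exists_rotate (hq : p.RotatesTo M q) {y : V} (hy : y ∈ q.support) (hyu : y ≠ u)
    (hadj : G.Adj y u) (hyM : y ∉ M.support) :
    ∃ z ∈ p.rotationEndpoints M, s(y, z) ∈ q.edges := by
  classical
  obtain ⟨z, hyz, q₂, hq₂⟩ := (q.dropUntil y hy).exists_eq_cons_of_ne hyu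
  have hsplit : q = (q.takeUntil y hy).append (cons hyz q₂) := by rw [← hq₂, take_spec]
  refine ⟨z, ⟨_, .rotate _ hyz q₂ hadj hyM (hsplit ▸ hq)⟩, ?_⟩
  rw [hsplit]
  simp [edges_append]

end RotatesTo

section LongestPath

variable {v w : V} {p : G.Walk v w}

lemma mem_support_of_adj_rotationEndpoint (hp : p.IsPath) (hpM : MRespecting M p)
    (hlong : ∀ (b : V) (r : G.Walk v b), r.IsPath → MRespecting M r → r.length ≤ p.length)
    {u y : V} (hu : u ∈ p.rotationEndpoints M) (hadj : G.Adj u y) (hy : y ∉ M.support) :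
    y ∈ p.support := by
  obtain ⟨q, hq⟩ := hu
  by_contra hyp
  have hyq : y ∉ q.support := fun h => hyp (hq.mem_support_iff.mp h)
  have := hlong _ _ ((hq.isPath hp).concat hyq hadj) ((hq.mRespecting hpM).concat hadj hy)
  rw [length_concat, hq.length_eq] at this
  omega

lemma exists_toSubgraph_adj_rotationEndpoint (hp : p.IsPath) {u y : V}
    (hu : u ∈ p.rotationEndpoints M) (hy : y ∈ p.support) (hyR : y ∉ p.rotationEndpoints M)
    (hyM : y ∉ M.support) (hadj : G.Adj y u) :
    ∃ z ∈ p.rotationEndpoints M, p.toSubgraph.Adj y z := by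
  obtain ⟨q, hq⟩ := hu
  obtain ⟨z, hzR, hyzq⟩ :=
    hq.exists_rotate (hq.mem_support_iff.mpr hy) (fun h => hyR (h ▸ ⟨q, hq⟩)) hadj hyM
  by_contra! hnone
  -- If no `p`-edge at `y` were broken, `q` would have all of them at `y` and `s(y, z)` besides.
  have hsub : p.toSubgraph.neighborSet y ⊂ q.toSubgraph.neighborSet y := by
    refine (Set.ssubset_iff_of_subset fun x hx => ?_).mpr
      ⟨z, adj_toSubgraph_iff_mem_edges.mpr hyzq, hnone z hzR⟩
    rcases hq.mem_edges (adj_toSubgraph_iff_mem_edges.mp hx) with h | h | h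
    · exact adj_toSubgraph_iff_mem_edges.mpr h
    · exact absurd h hyR
    · exact absurd hx (hnone x h)
  have hyw : y ≠ w := by rintro rfl; exact hyR p.end_mem_rotationEndpoints
  exact (Set.ncard_lt_ncard hsub (finite_neighborSet_toSubgraph q)).not_ge
    (hp.ncard_neighborSet_toSubgraph_le_of_ne (hq.isPath hp) hy hyw)

end LongestPath

end SimpleGraph.Walk

theorem stmt_14_general {V : Type*} [Fintype V] (H M : SimpleGraph V)
    (hexp : MRespExpander H M)
    (v w : V) (p : (H ⊔ M).Walk v w) (hp : p.IsPath) (hpr : MRespecting M p)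
    (hlong : ∀ (a b : V) (q : (H ⊔ M).Walk a b),
      q.IsPath → MRespecting M q → q.length ≤ p.length) :
    Fintype.card V ≤ 8 * {u | u ∈ p.support ∧ ∃ q : (H ⊔ M).Walk v u,
      q.IsPath ∧ MRespecting M q ∧ ∀ x, x ∈ q.support ↔ x ∈ p.support}.ncard := by
  set R := p.rotationEndpoints M
  have hRS : R ⊆ {u | u ∈ p.support ∧ ∃ q : (H ⊔ M).Walk v u,
      q.IsPath ∧ MRespecting M q ∧ ∀ x, x ∈ q.support ↔ x ∈ p.support} :=
    fun u ⟨q, hq⟩ => ⟨hq.mem_support_iff.mp q.end_mem_support, q, hq.isPath hp,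
      hq.mRespecting hpr, fun _ => hq.mem_support_iff⟩
  by_contra! hsmall
  have hR : 8 * R.ncard ≤ Fintype.card V :=
    (Nat.mul_le_mul_left 8 (Set.ncard_le_ncard hRS)).trans hsmall.le
  have hY : ((⋃ u ∈ R, H.neighborSet u) \ R) \ M.support ⊆
      ⋃ z ∈ R, p.toSubgraph.neighborSet z := by
    rintro y ⟨⟨hyN, hyR⟩, hyM⟩
    obtain ⟨u, huR, huy⟩ : ∃ u ∈ R, H.Adj u y := by simpa using hyN
    have huy' : (H ⊔ M).Adj u y := Or.inl huy
    have hyp := p.mem_support_of_adj_rotationEndpoint hp hpr (hlong v) huR huy' hyM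
    obtain ⟨z, hzR, hyz⟩ :=
      p.exists_toSubgraph_adj_rotationEndpoint hp huR hyp hyR hyM huy'.symm
    exact Set.mem_biUnion hzR hyz.symm
  have hexpand := hexp.2 R hR
  have hcount := (Set.ncard_le_ncard hY).trans_lt
    (hp.ncard_biUnion_neighborSet_toSubgraph_lt (Set.toFinite R) p.end_mem_rotationEndpoints)
  omega

/-- Let `H` be an `M`-respecting 2-expander (for a matching `M` on `V(H)`), and let
`P` be a longest `M`-respecting path in `H + M` with endpoint `v`.  Then at least
`|V(H)|/8` vertices `u ∈ V(P)` admit an `M`-respecting `v–u` path in `H + M` whose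
vertex set equals `V(P)`. -/
theorem stmt_14 {V : Type*} [Fintype V] [DecidableEq V] (H M : SimpleGraph V)
    (hM : ∀ v : V, (M.neighborSet v).Subsingleton)
    (hexp : MRespExpander H M)
    (v w : V) (p : (H ⊔ M).Walk v w) (hp : p.IsPath) (hpr : MRespecting M p)
    (hlong : ∀ (a b : V) (q : (H ⊔ M).Walk a b),
      q.IsPath → MRespecting M q → q.length ≤ p.length) :
    Fintype.card V ≤ 8 * {u | u ∈ p.support ∧ ∃ q : (H ⊔ M).Walk v u,
      q.IsPath ∧ MRespecting M q ∧ ∀ x, x ∈ q.support ↔ x ∈ p.support}.ncard :=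
  stmt_14_general H M hexp v w p hp hpr hlong
end

section
/- Let D be a finite directed graph on vertex set T in which every vertex outside a subset A ⊆ T has exactly two out-neighbours and every vertex of T has at most one in-neighbour, all out-neighbours of a vertex x ∈ T \ A lie in A ∪ {vertices earlier than x in a fixed linear order on T \ A}, and vertices of A have no out-neighbours. Then the underlying undirected graph of D contains a collection of vertex-disjoint paths covering T \ A such that each path has both endpoints in A and all internal vertices in T \ A, using at most 2|T \ A| vertices of A in total. -/
/-!
Every vertex outside `A` keeps the edges to both of its children unless the edge from its parent
is kept, in which case it drops one of them. Then vertices outside `A` get degree exactly `2` and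
vertices of `A`, having no children and at most one parent, degree at most `1`. The kept graph is
a forest because `D` is well-founded with in-degrees at most `1`: on a cycle, a vertex with no
child on the cycle would need two parents. Each vertex of `A` that is used is a child of a vertex
outside `A`, and there are at most `2|T \ A|` such children.
-/

open SimpleGraph

theorem SimpleGraph.isAcyclic_fromRel {V : Type*} {R : V → V → Prop}
    (hwf : WellFounded (flip R)) (hin : ∀ y, {x | R x y}.Subsingleton) :
    (fromRel R).IsAcyclic := by
  intro v c hc
  -- a vertex of the cycle with no `R`-child on the cycle has both cycle neighbours as `R`-parents
  obtain ⟨m, hm, hmin⟩ := hwf.has_min {x | x ∈ c.support} ⟨v, c.start_mem_support⟩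
  have hparents : c.toSubgraph.neighborSet m ⊆ {x | R x m} := by
    intro w hw
    have hwc : w ∈ c.support := c.mem_verts_toSubgraph.mp hw.snd_mem
    obtain ⟨-, hmw | hwm⟩ := hw.adj_sub
    · exact absurd hmw (hmin w hwc)
    · exact hwm
  have hsub : (c.toSubgraph.neighborSet m).Subsingleton := (hin m).anti hparents
  have h1 := (Set.ncard_le_one hsub.finite).mpr hsub
  have h2 := hc.ncard_neighborSet_toSubgraph_eq_two hm
  omega

theorem Set.ncard_biUnion_le_mul {ι α : Type*} {t : Set ι} (ht : t.Finite) {s : ι → Set α}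
    {k : ℕ} (hk : ∀ i ∈ t, (s i).ncard ≤ k) : (⋃ i ∈ t, s i).ncard ≤ k * t.ncard :=
  calc (⋃ i ∈ t, s i).ncard = (⋃ i ∈ ht.toFinset, s i).ncard := by simp
    _ ≤ ∑ i ∈ ht.toFinset, (s i).ncard := Finset.set_ncard_biUnion_le _ _
    _ ≤ ∑ _i ∈ ht.toFinset, k := Finset.sum_le_sum (by simpa using hk)
    _ = k * t.ncard := by simp [Set.ncard_eq_toFinset_card t ht, mul_comm]

namespace PathCover

variable {T : Type*} {D : T → T → Prop}

open Classical in
noncomputable def spareChild (D : T → T → Prop) (p : T) : T :=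
  if h : ∃ y, D p y then h.choose else p

lemma rel_spareChild {p y : T} (h : D p y) : D p (spareChild D p) := by
  have h' : ∃ y, D p y := ⟨y, h⟩
  rw [spareChild, dif_pos h']
  exact h'.choose_spec

variable (hwf : WellFounded D)

def ParentKept : T → Prop :=
  hwf.fix fun x ih => ∃ p, ∃ h : D p x, x ≠ spareChild D p ∨ ¬ih p h

def KeptEdge (p x : T) : Prop := D p x ∧ (x ≠ spareChild D p ∨ ¬ParentKept hwf p)

lemma parentKept_iff {x : T} : ParentKept hwf x ↔ ∃ p, KeptEdge hwf p x := by
  rw [ParentKept, hwf.fix_eq]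
  simp only [exists_prop]
  rfl

def graph : SimpleGraph T := fromRel (KeptEdge hwf)

lemma graph_adj {x y : T} (h : (graph hwf).Adj x y) : D x y ∨ D y x :=
  h.2.imp And.left And.left

lemma neighborSet_graph (v : T) :
    (graph hwf).neighborSet v = {w | KeptEdge hwf v w} ∪ {w | KeptEdge hwf w v} := by
  ext w
  simp only [graph, mem_neighborSet, fromRel_adj, Set.mem_union, Set.mem_ofPred_eq,
    and_iff_right_iff_imp]
  rintro (h | h) rfl <;> exact hwf.irrefl.irrefl _ h.1

lemma ncard_neighborSet_graph_eq_two [Finite T] (hin : ∀ y, {x | D x y}.Subsingleton) {v : T}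
    (hv : {y | D v y}.ncard = 2) : ((graph hwf).neighborSet v).ncard = 2 := by
  obtain ⟨y, hy⟩ := Set.nonempty_of_ncard_ne_zero (hv ▸ two_ne_zero)
  by_cases hk : ParentKept hwf v
  · obtain ⟨p, hp⟩ := (parentKept_iff hwf).mp hk
    have hchildren : {w | KeptEdge hwf v w} = {y | D v y} \ {spareChild D v} := by
      ext; simp [KeptEdge, hk]
    have hparent : {w | KeptEdge hwf w v} = {p} :=
      ((hin v).anti fun _ h => h.1).eq_singleton_of_mem hp
    have hdisj : Disjoint ({y | D v y} \ {spareChild D v}) {p} :=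
      Set.disjoint_singleton_right.mpr fun h => hwf.asymmetric _ _ hp.1 h.1
    rw [neighborSet_graph, hchildren, hparent, Set.ncard_union_eq hdisj,
      Set.ncard_sdiff_singleton_of_mem (s := {y | D v y}) (rel_spareChild hy), hv,
      Set.ncard_singleton]
  · have hchildren : {w | KeptEdge hwf v w} = {y | D v y} := by
      ext; simp [KeptEdge, hk]
    have hparent : {w | KeptEdge hwf w v} = ∅ :=
      Set.eq_empty_of_forall_notMem fun w hw => hk ((parentKept_iff hwf).mpr ⟨w, hw⟩)
    rw [neighborSet_graph, hchildren, hparent, Set.union_empty, hv]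

lemma ncard_neighborSet_graph_le_one [Finite T] (hin : ∀ y, {x | D x y}.Subsingleton) {v : T}
    (hv : ∀ y, ¬D v y) : ((graph hwf).neighborSet v).ncard ≤ 1 := by
  have hsub : (graph hwf).neighborSet v ⊆ {x | D x v} := by
    rw [neighborSet_graph]
    rintro w (h | h)
    exacts [absurd h.1 (hv w), h.1]
  exact (Set.ncard_le_ncard hsub).trans (Set.ncard_le_one_iff_subsingleton.mpr (hin v))

lemma isAcyclic_graph (hwf' : WellFounded (flip D)) (hin : ∀ y, {x | D x y}.Subsingleton) :
    (graph hwf).IsAcyclic :=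
  isAcyclic_fromRel (Subrelation.wf (fun h => h.1) hwf') fun y => (hin y).anti fun _ h => h.1

lemma exists_rel_of_mem_support {v : T} (hv : ∀ y, ¬D v y) (h : v ∈ (graph hwf).support) :
    ∃ p, D p v := by
  obtain ⟨w, hw⟩ := h
  exact ⟨w, (graph_adj hwf hw).resolve_left (hv w)⟩

end PathCover

open PathCover in
theorem stmt_18_general {T : Type*} [Fintype T] [LinearOrder T]
    (D : T → T → Prop) (A : Set T)
    (hout : ∀ x ∉ A, {y | D x y}.ncard = 2)
    (hin : ∀ y : T, {x | D x y}.ncard ≤ 1)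
    (hdir : ∀ x ∉ A, ∀ y, D x y → y ∈ A ∨ y < x)
    (hA : ∀ a ∈ A, ∀ y, ¬D a y) :
    ∃ F : SimpleGraph T,
      (∀ x y, F.Adj x y → x ≠ y ∧ (D x y ∨ D y x)) ∧
      F.IsAcyclic ∧ (∀ v, (F.neighborSet v).ncard ≤ 2) ∧
      (Aᶜ ⊆ F.support) ∧
      (∀ v ∈ F.support, (F.neighborSet v).ncard ≤ 1 → v ∈ A) ∧
      (∀ v, (F.neighborSet v).ncard = 2 → v ∉ A) ∧
      (F.support ∩ A).ncard ≤ 2 * (Aᶜ : Set T).ncard := by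
  classical
  have hin' (y : T) : {x | D x y}.Subsingleton := Set.ncard_le_one_iff_subsingleton.mp (hin y)
  let rank (x : T) : WithBot T := if x ∈ A then ⊥ else x
  have rank_lt {x y : T} (h : D x y) : rank y < rank x := by
    have hx : x ∉ A := fun hx => hA x hx y h
    by_cases hy : y ∈ A
    · simp [rank, hx, hy]
    · simpa [rank, hx, hy] using (hdir x hx y h).resolve_left hy
  have hwf : WellFounded D :=
    Subrelation.wf rank_lt (InvImage.wf (r := (· > ·)) rank wellFounded_gt)
  have hwf' : WellFounded (flip D) := Subrelation.wf rank_lt (InvImage.wf rank wellFounded_lt)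
  have hdeg2 (v : T) (hv : v ∉ A) : ((graph hwf).neighborSet v).ncard = 2 :=
    ncard_neighborSet_graph_eq_two hwf hin' (hout v hv)
  have hdeg1 (v : T) (hv : v ∈ A) : ((graph hwf).neighborSet v).ncard ≤ 1 :=
    ncard_neighborSet_graph_le_one hwf hin' (hA v hv)
  refine ⟨graph hwf, fun x y h => ⟨(graph hwf).ne_of_adj h, graph_adj hwf h⟩,
    isAcyclic_graph hwf hwf' hin', fun v => ?_, fun v hv => ?_, fun v _ h => ?_,
    fun v h hv => ?_, ?_⟩
  · by_cases hv : v ∈ A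
    exacts [(hdeg1 v hv).trans one_le_two, (hdeg2 v hv).le]
  · obtain ⟨w, hw⟩ := Set.nonempty_of_ncard_ne_zero (s := (graph hwf).neighborSet v)
      (by rw [hdeg2 v hv]; norm_num)
    exact ⟨w, hw⟩
  · by_contra hv
    have := hdeg2 v hv
    omega
  · have := hdeg1 v hv
    omega
  · have hsub : (graph hwf).support ∩ A ⊆ ⋃ x ∈ Aᶜ, {y | D x y} := by
      rintro a ⟨ha, haA⟩
      obtain ⟨p, hp⟩ := exists_rel_of_mem_support hwf (hA a haA) ha
      exact Set.mem_biUnion (fun hpA => hA p hpA a hp) hp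
    exact (Set.ncard_le_ncard hsub).trans
      (Set.ncard_biUnion_le_mul (Set.toFinite _) fun x hx => (hout x hx).le)

/-- Let `D` be a finite digraph on `T` with `A ⊆ T` and a fixed linear order, in
which every vertex outside `A` has exactly two out-neighbours (each in `A` or
strictly earlier in the order), every vertex has at most one in-neighbour, and
vertices of `A` have no out-neighbours.  Then the underlying undirected graph
contains a linear forest (acyclic, maximum degree `≤ 2`) covering `T \ A` whose
path endpoints lie in `A`, whose internal (degree-2) vertices lie in `T \ A`, and
which uses at most `2|T \ A|` vertices of `A`. -/
theorem stmt_18 {T : Type*} [Fintype T] [DecidableEq T] [LinearOrder T]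
    (D : T → T → Prop) (A : Set T)
    (hout : ∀ x ∉ A, {y | D x y}.ncard = 2)
    (hin : ∀ y : T, {x | D x y}.ncard ≤ 1)
    (hdir : ∀ x ∉ A, ∀ y, D x y → y ∈ A ∨ y < x)
    (hA : ∀ a ∈ A, ∀ y, ¬D a y) :
    ∃ F : SimpleGraph T,
      (∀ x y, F.Adj x y → x ≠ y ∧ (D x y ∨ D y x)) ∧
      F.IsAcyclic ∧ (∀ v, (F.neighborSet v).ncard ≤ 2) ∧
      (Aᶜ ⊆ F.support) ∧
      (∀ v ∈ F.support, (F.neighborSet v).ncard ≤ 1 → v ∈ A) ∧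
      (∀ v, (F.neighborSet v).ncard = 2 → v ∉ A) ∧
      (F.support ∩ A).ncard ≤ 2 * (Aᶜ : Set T).ncard :=
  stmt_18_general D A hout hin hdir hA
end
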